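/- arXiv:2012.01670 — 5 statements merged into one kernel-verified Lean document; each statement's English description precedes it below -/
import Mathlib

section
/- For every positive integer n and complex numbers z, y with sin(nz) ≠ 0 and sin(z - kπ/n) ≠ 0 for all k = 0, 1, ..., n-1, we have n·sin(nz + y)/sin(nz) = ∑_{k=0}^{n-1} sin(z + y - kπ/n)/sin(z - kπ/n). -/
open Complex

private lemma sin_exp_form (w : ℂ) :
    Complex.sin w = (Complex.exp (w * I) - Complex.exp (-(w * I))) / (2 * I) := by
  rw [Complex.sin]
  have h : -w * I = -(w * I) := by ring
  rw [h]
  field_simp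
  ring_nf
  simp [Complex.I_sq]

private lemma sum_pow_roots (n : ℕ) (hn : 0 < n) (ω X : ℂ) (hω : IsPrimitiveRoot ω n) :
    ∑ k ∈ Finset.range n, (∑ j ∈ Finset.range n, X ^ j * (ω ^ k) ^ (n - 1 - j))
      = n * X ^ (n - 1) := by
  rw [Finset.sum_comm]
  have hinner : ∀ j ∈ Finset.range n,
      (∑ k ∈ Finset.range n, X ^ j * (ω ^ k) ^ (n - 1 - j))
        = if j = n - 1 then (n : ℂ) * X ^ (n - 1) else 0 := by
    intro j hj
    rw [Finset.mem_range] at hj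
    have hpow : ∀ k : ℕ, (ω ^ k) ^ (n - 1 - j) = (ω ^ (n - 1 - j)) ^ k := by
      intro k; rw [← pow_mul, ← pow_mul, Nat.mul_comm]
    simp only [hpow, ← Finset.mul_sum]
    by_cases hcase : j = n - 1
    · subst hcase
      simp [Nat.sub_self, mul_comm]
    · have hm : 0 < n - 1 - j := by omega
      have hm2 : n - 1 - j < n := by omega
      have hne1 : ω ^ (n - 1 - j) ≠ 1 := hω.pow_ne_one_of_pos_of_lt hm.ne' hm2
      rw [geom_sum_eq hne1]
      have : (ω ^ (n - 1 - j)) ^ n = 1 := by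
        rw [← pow_mul, Nat.mul_comm, pow_mul, hω.pow_eq_one, one_pow]
      rw [this]
      simp [hcase]
  rw [Finset.sum_congr rfl hinner, Finset.sum_ite_eq' (Finset.range n)]
  have : n - 1 ∈ Finset.range n := by simp; omega
  simp [this]

private lemma sum_inv_sub_roots (n : ℕ) (hn : 0 < n) (ω X : ℂ) (hω : IsPrimitiveRoot ω n)
    (hX : ∀ k < n, X - ω ^ k ≠ 0) (hXn : X ^ n - 1 ≠ 0) :
    ∑ k ∈ Finset.range n, 1 / (X - ω ^ k) = n * X ^ (n - 1) / (X ^ n - 1) := by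
  have hterm : ∀ k ∈ Finset.range n,
      1 / (X - ω ^ k)
        = (∑ j ∈ Finset.range n, X ^ j * (ω ^ k) ^ (n - 1 - j)) / (X ^ n - 1) := by
    intro k hk
    rw [Finset.mem_range] at hk
    have hgs : (∑ j ∈ Finset.range n, X ^ j * (ω ^ k) ^ (n - 1 - j)) * (X - ω ^ k)
        = X ^ n - (ω ^ k) ^ n := geom_sum₂_mul X (ω ^ k) n
    have hone : (ω ^ k) ^ n = 1 := by
      rw [← pow_mul, Nat.mul_comm, pow_mul, hω.pow_eq_one, one_pow]
    rw [hone] at hgs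
    rw [eq_div_iff hXn, ← hgs]
    field_simp [hX k hk]
  rw [Finset.sum_congr rfl hterm, ← Finset.sum_div, sum_pow_roots n hn ω X hω]

private lemma key_alg (n : ℕ) (hn : 0 < n) (ω X W : ℂ) (hω : IsPrimitiveRoot ω n)
    (hX : ∀ k < n, X - ω ^ k ≠ 0) (hXn : X ^ n - 1 ≠ 0) :
    ∑ k ∈ Finset.range n, (X * W - ω ^ k) / (X - ω ^ k)
      = n * (X ^ n * W - 1) / (X ^ n - 1) := by
  have hterm : ∀ k ∈ Finset.range n,
      (X * W - ω ^ k) / (X - ω ^ k) = 1 + (W - 1) * X * (1 / (X - ω ^ k)) := by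
    intro k hk
    rw [Finset.mem_range] at hk
    field_simp [hX k hk]
    ring
  rw [Finset.sum_congr rfl hterm, Finset.sum_add_distrib, ← Finset.mul_sum,
    sum_inv_sub_roots n hn ω X hω hX hXn]
  have hXX : X * X ^ (n - 1) = X ^ n := by
    rw [← pow_succ']
    congr 1
    omega
  simp only [Finset.sum_const, Finset.card_range, nsmul_eq_mul, mul_one]
  field_simp
  linear_combination ((W - 1) * (n : ℂ)) * hXX

theorem trig_sum_identity (n : ℕ) (hn : 0 < n) (z y : ℂ)
    (h1 : Complex.sin (n * z) ≠ 0)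
    (h2 : ∀ k < n, Complex.sin (z - k * Real.pi / n) ≠ 0) :
    (n : ℂ) * Complex.sin (n * z + y) / Complex.sin (n * z) =
      ∑ k ∈ Finset.range n,
        Complex.sin (z + y - k * Real.pi / n) / Complex.sin (z - k * Real.pi / n) := by
  have hn0 : (n : ℂ) ≠ 0 := Nat.cast_ne_zero.mpr hn.ne'
  set u : ℂ := Complex.exp (z * I) with hu
  set v : ℂ := Complex.exp (y * I) with hv
  set ω : ℂ := Complex.exp (2 * Real.pi * I / n) with hω_def
  have hω : IsPrimitiveRoot ω n := Complex.isPrimitiveRoot_exp n hn.ne'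
  have hune : u ≠ 0 := Complex.exp_ne_zero _
  have hvne : v ≠ 0 := Complex.exp_ne_zero _
  have htk : ∀ k : ℕ, Complex.exp ((k * Real.pi / n) * I) ^ 2 = ω ^ k := by
    intro k
    rw [hω_def, ← Complex.exp_nat_mul, ← Complex.exp_nat_mul]
    congr 1
    push_cast
    field_simp
  have hu_n : u ^ n ≠ 0 := pow_ne_zero _ hune
  have h2I : (2 * I : ℂ) ≠ 0 := mul_ne_zero two_ne_zero Complex.I_ne_zero
  have gen : ∀ (w : ℂ) (k : ℕ), Complex.sin (w - k * Real.pi / n)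
      = ((Complex.exp (w * I)) ^ 2 - ω ^ k)
        / (2 * I * Complex.exp (w * I) * Complex.exp ((k * Real.pi / n) * I)) := by
    intro w k
    set s : ℂ := Complex.exp (w * I) with hs
    set t : ℂ := Complex.exp ((k * Real.pi / n) * I) with ht
    have hsne : s ≠ 0 := Complex.exp_ne_zero _
    have htne : t ≠ 0 := Complex.exp_ne_zero _
    rw [sin_exp_form]
    have e1 : (w - k * Real.pi / n) * I = w * I - (k * Real.pi / n) * I := by ring
    have e2 : -(w * I - (k * Real.pi / n) * I) = (k * Real.pi / n) * I - w * I := by ring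
    rw [e1, e2, Complex.exp_sub, Complex.exp_sub, ← hs, ← ht, ← htk k, ← ht]
    rw [div_sub_div _ _ htne hsne, div_div, div_eq_div_iff
      (mul_ne_zero (mul_ne_zero htne hsne) h2I)
      (mul_ne_zero (mul_ne_zero h2I hsne) htne)]
    ring
  have hsin1 : ∀ k : ℕ, Complex.sin (z - k * Real.pi / n)
      = (u ^ 2 - ω ^ k) / (2 * I * u * Complex.exp ((k * Real.pi / n) * I)) := by
    intro k
    rw [hu]
    exact gen z k
  have hsin2 : ∀ k : ℕ, Complex.sin (z + y - k * Real.pi / n)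
      = (u ^ 2 * v ^ 2 - ω ^ k) / (2 * I * u * v * Complex.exp ((k * Real.pi / n) * I)) := by
    intro k
    have hzy : Complex.exp ((z + y) * I) = u * v := by
      rw [hu, hv, ← Complex.exp_add]
      congr 1
      ring
    have := gen (z + y) k
    rw [hzy] at this
    rw [this, mul_pow, ← mul_assoc (2 * I) u v]
  have hun : Complex.exp ((n : ℂ) * z * I) = u ^ n := by
    rw [hu, ← Complex.exp_nat_mul]; congr 1; ring
  have hu2n : (u ^ 2) ^ n = u ^ n * u ^ n := by rw [← pow_mul, Nat.mul_comm, pow_mul, sq]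
  have hsin3 : Complex.sin ((n : ℂ) * z) = ((u ^ 2) ^ n - 1) / (2 * I * u ^ n) := by
    rw [sin_exp_form]
    have e2 : -((n : ℂ) * z * I) = 0 - (n : ℂ) * z * I := by ring
    rw [e2, Complex.exp_sub, Complex.exp_zero, hun, hu2n]
    rw [div_eq_div_iff h2I (mul_ne_zero h2I hu_n)]
    field_simp
  have hsin4 : Complex.sin ((n : ℂ) * z + y)
      = ((u ^ 2) ^ n * v ^ 2 - 1) / (2 * I * u ^ n * v) := by
    rw [sin_exp_form]
    have e1 : ((n : ℂ) * z + y) * I = (n : ℂ) * z * I + y * I := by ring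
    have e2 : -((n : ℂ) * z * I + y * I) = 0 - ((n : ℂ) * z * I + y * I) := by ring
    rw [e1, e2, Complex.exp_sub, Complex.exp_zero, Complex.exp_add, hun, ← hv, hu2n]
    rw [div_eq_div_iff h2I (mul_ne_zero (mul_ne_zero h2I hu_n) hvne)]
    field_simp
  have hXn : (u ^ 2) ^ n - 1 ≠ 0 := by
    intro h
    apply h1
    rw [hsin3, h, zero_div]
  have hXk : ∀ k < n, u ^ 2 - ω ^ k ≠ 0 := by
    intro k hk h
    apply h2 k hk
    rw [hsin1 k, h, zero_div]
  have hterm : ∀ k ∈ Finset.range n,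
      Complex.sin (z + y - k * Real.pi / n) / Complex.sin (z - k * Real.pi / n)
        = (u ^ 2 * v ^ 2 - ω ^ k) / (u ^ 2 - ω ^ k) / v := by
    intro k hk
    rw [Finset.mem_range] at hk
    have hB : u ^ 2 - ω ^ k ≠ 0 := hXk k hk
    set t : ℂ := Complex.exp ((k * Real.pi / n) * I) with ht
    have htne : t ≠ 0 := Complex.exp_ne_zero _
    rw [hsin1 k, hsin2 k, ← ht, div_div_div_eq, div_div, div_eq_div_iff
      (mul_ne_zero (mul_ne_zero (mul_ne_zero (mul_ne_zero h2I hune) hvne) htne) hB)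
      (mul_ne_zero hB hvne)]
    ring
  rw [Finset.sum_congr rfl hterm, ← Finset.sum_div,
    key_alg n hn ω (u ^ 2) (v ^ 2) hω hXk hXn, hsin3, hsin4]
  rw [mul_div_assoc' (n : ℂ), div_div_div_eq, div_div, div_eq_div_iff
      (mul_ne_zero (mul_ne_zero (mul_ne_zero h2I hu_n) hvne) hXn)
      (mul_ne_zero hXn hvne)]
  ring
end

section
/- Let τ have positive imaginary part. If f : ℂ → ℂ is entire and satisfies f(z) = f(z+π) = q² e^{8iz} f(z+πτ) for all z, where q = exp(2πiτ), then f(0) - f(π/2) + q^{1/2} f((π+πτ)/2) - q^{1/2} f(πτ/2) = 0, where q^{1/2} = exp(πiτ). -/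
open Complex

private lemma aux_horiz (u : ℂ → ℂ) (hu : Differentiable ℂ u)
    (hp : ∀ z : ℂ, u (z + (Real.pi : ℂ)) = u z) (y₁ y₂ : ℝ) :
    (∫ t in (0:ℝ)..Real.pi, u (t + y₁ * I)) = ∫ t in (0:ℝ)..Real.pi, u (t + y₂ * I) := by
  have h := Complex.integral_boundary_rect_eq_zero_of_differentiableOn u
    ⟨0, y₁⟩ ⟨Real.pi, y₂⟩ hu.differentiableOn
  have hv : (∫ y in y₁..y₂, u ((Real.pi : ℝ) + y * I))
      = ∫ y in y₁..y₂, u ((0 : ℝ) + y * I) := by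
    refine intervalIntegral.integral_congr fun y _ => ?_
    rw [add_comm ((Real.pi : ℝ) : ℂ), hp]
    norm_num
  simp only [Complex.ofReal_zero, zero_add] at hv
  have h' : (∫ t : ℝ in (0:ℝ)..Real.pi, u (t + y₁ * I))
      - (∫ t : ℝ in (0:ℝ)..Real.pi, u (t + y₂ * I))
      + I • (∫ y in y₁..y₂, u ((Real.pi : ℝ) + y * I))
      - I • (∫ y in y₁..y₂, u ((0:ℝ) + y * I)) = 0 := h
  simp only [Complex.ofReal_zero, zero_add] at h'
  rw [hv] at h'
  linear_combination h'

theorem entire_function_relation (τ : ℂ) (hτ : 0 < τ.im)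
    (q : ℂ) (hq : q = Complex.exp (2 * Real.pi * Complex.I * τ))
    (f : ℂ → ℂ) (hf : Differentiable ℂ f)
    (hper : ∀ z : ℂ, f z = f (z + Real.pi) ∧
        f z = q ^ 2 * Complex.exp (8 * Complex.I * z) * f (z + Real.pi * τ)) :
    f 0 - f (Real.pi / 2) +
        Complex.exp (Real.pi * Complex.I * τ) * f ((Real.pi + Real.pi * τ) / 2) -
        Complex.exp (Real.pi * Complex.I * τ) * f (Real.pi * τ / 2) = 0 := by
  haveI : Fact (0 < Real.pi) := ⟨Real.pi_pos⟩
  have hπ : (Real.pi : ℂ) ≠ 0 := by exact_mod_cast Real.pi_ne_zero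
  have hq0 : q ≠ 0 := hq ▸ Complex.exp_ne_zero _
  have hfper : ∀ z : ℂ, f (z + (Real.pi:ℂ)) = f z := fun z => ((hper z).1).symm
  -- the line integrals
  set J : ℤ → ℝ → ℂ := fun n y => ∫ t in (0:ℝ)..Real.pi,
      Complex.exp (-(2 * I * n) * (t + y * I)) * f (t + y * I) with hJdef
  have hJconst : ∀ (n : ℤ) (y : ℝ), J n y = J n 0 := by
    intro n y
    refine aux_horiz (fun z => Complex.exp (-(2 * I * n) * z) * f z)
      (((differentiable_const _).mul differentiable_id).cexp.mul hf) (fun z => ?_) y 0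
    have h1 : Complex.exp (-(2 * I * (n:ℂ)) * ((Real.pi:ℂ))) = 1 := by
      rw [show -(2 * I * (n:ℂ)) * (Real.pi:ℂ) = ((-n : ℤ):ℂ) * (2 * Real.pi * I) by push_cast; ring,
        Complex.exp_int_mul_two_pi_mul_I]
    rw [mul_add, Complex.exp_add, h1, mul_one, hfper]
  set a : ℤ → ℂ := fun n => (1 / (Real.pi : ℂ)) * J n 0 with hadef
  -- recurrence
  have hrec : ∀ n : ℤ, a (n + 4) = q ^ (n + 2) * a n := by
    intro n
    have key : q ^ (n+2) * J n (Real.pi * τ.im) = J (n+4) 0 := by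
      set r : ℝ := Real.pi * τ.re with hrdef
      set g : ℝ → ℂ := fun s : ℝ => Complex.exp (-(2 * I * ((n+4 : ℤ) : ℂ)) * s) * f s with hgdef
      have hgper : Function.Periodic g Real.pi := by
        intro s
        simp only [hgdef]
        push_cast
        have h1 : Complex.exp (-(2 * I * ((n:ℂ)+4)) * ((s:ℂ) + (Real.pi:ℂ)))
            = Complex.exp (-(2 * I * ((n:ℂ)+4)) * s) := by
          rw [mul_add, Complex.exp_add,
            show -(2 * I * ((n:ℂ)+4)) * (Real.pi:ℂ) = ((-(n+4) : ℤ):ℂ) * (2*Real.pi*I) by push_cast; ring,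
            Complex.exp_int_mul_two_pi_mul_I, mul_one]
        rw [h1, hfper]
      have step1 : q ^ (n+2) * J n (Real.pi * τ.im) = ∫ t in (0:ℝ)..Real.pi, g (t - r) := by
        rw [hJdef, ← intervalIntegral.integral_const_mul]
        refine intervalIntegral.integral_congr fun t _ => ?_
        simp only [hgdef]
        set w : ℂ := ((t - r : ℝ) : ℂ) with hwdef
        have hπτ : ((Real.pi * τ.re : ℝ) : ℂ) + ((Real.pi * τ.im : ℝ) : ℂ) * I = (Real.pi : ℂ) * τ := by
          conv_rhs => rw [← Complex.re_add_im τ]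
          push_cast; ring
        have hzw : (t : ℂ) + ((Real.pi * τ.im : ℝ) : ℂ) * I = w + (Real.pi:ℂ) * τ := by
          rw [← hπτ, hwdef, hrdef]; push_cast; ring
        rw [hzw, (hper w).2]
        have hqn : Complex.exp (-(2 * I * (n:ℂ)) * ((Real.pi:ℂ) * τ)) = q ^ (-n : ℤ) := by
          rw [show -(2 * I * (n:ℂ)) * ((Real.pi:ℂ) * τ) = ((-n : ℤ):ℂ) * (2 * Real.pi * I * τ) by push_cast; ring,
            Complex.exp_int_mul, ← hq]
        rw [mul_add (-(2 * I * (n:ℂ))), Complex.exp_add, hqn]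
        have hexp4 : Complex.exp (-(2 * I * ((n+4 : ℤ) : ℂ)) * w) * Complex.exp (8 * I * w)
            = Complex.exp (-(2 * I * (n:ℂ)) * w) := by
          rw [← Complex.exp_add]; congr 1; push_cast; ring
        have hq2' : q ^ (n+2) * q ^ (-n : ℤ) = q ^ (2:ℕ) := by
          rw [← zpow_add₀ hq0, ← zpow_natCast q 2]
          congr 1; ring
        linear_combination (-(q^(2:ℕ) * f (w + (Real.pi:ℂ)*τ))) * hexp4
          + (Complex.exp (-(2*I*(n:ℂ))*w) * f (w + (Real.pi:ℂ)*τ)) * hq2'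
      have step2 : (∫ t in (0:ℝ)..Real.pi, g (t - r)) = ∫ t in (0:ℝ)..Real.pi, g t := by
        rw [intervalIntegral.integral_comp_sub_right, zero_sub,
          show Real.pi - r = -r + Real.pi by ring, hgper.intervalIntegral_add_eq (-r) 0, zero_add]
      have step3 : (∫ t in (0:ℝ)..Real.pi, g t) = J (n+4) 0 := by
        rw [hJdef]
        refine intervalIntegral.integral_congr fun t _ => ?_
        simp [hgdef]
      rw [step1, step2, step3]
    have h2 : J n (Real.pi * τ.im) = J n 0 := hJconst n _
    have h3 : J (n+4) 0 = q ^ (n+2) * J n 0 := by rw [← key, h2]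
    simp only [hadef, h3]
    ring
  have hcomb : ∀ (x : ℂ) (e₁ e₂ e₃ : ℤ), e₁ + e₂ = e₃ → q^e₁ * (x * q^e₂) = x * q^e₃ := by
    intro x e₁ e₂ e₃ h
    rw [← h, zpow_add₀ hq0]; ring
  have hrecInv : ∀ n : ℤ, a n = q ^ (-(n+2)) * a (n+4) := by
    intro n
    rw [hrec n, ← mul_assoc, ← zpow_add₀ hq0,
      show -(n+2) + (n+2) = 0 by ring, zpow_zero, one_mul]
  have hkey : ∀ (k n : ℤ), a (n + 4*k) = a n * q ^ (2*k^2 + k*n) := by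
    intro k
    induction k using Int.induction_on with
    | zero => intro n; norm_num
    | succ k ih =>
      intro n
      have h1 : n + 4*((k:ℤ)+1) = (n + 4*(k:ℤ)) + 4 := by ring
      rw [h1, hrec, ih]
      exact hcomb _ _ _ _ (by ring)
    | pred k ih =>
      intro n
      have h1 : (n + 4*(-(k:ℤ)-1)) + 4 = n + 4*(-(k:ℤ)) := by ring
      have h2 := hrecInv (n + 4*(-(k:ℤ)-1))
      rw [h1, ih] at h2
      rw [h2]
      exact hcomb _ _ _ _ (by ring)
  -- norm of powers of q
  have hqnorm : ∀ E : ℤ, ‖q ^ E‖ = Real.exp ((E:ℝ) * (-2*Real.pi*τ.im)) := by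
    intro E
    rw [hq, ← Complex.exp_int_mul, Complex.norm_exp]
    congr 1
    rw [show ((E:ℂ) * (2*(Real.pi:ℂ)*I*τ)) = ((((E:ℝ) * (2*Real.pi)) : ℝ):ℂ) * (τ * I) by push_cast; ring,
      Complex.re_ofReal_mul, Complex.mul_I_re]
    ring
  set C : ℝ := max (max ‖a 0‖ ‖a 1‖) (max ‖a 2‖ ‖a 3‖) with hCdef
  have hC0 : 0 ≤ C := le_trans (norm_nonneg (a 0)) (le_trans (le_max_left _ _) (le_max_left _ _))
  have hbound : ∀ n : ℤ, ‖a n‖ ≤ C * Real.exp (-(Real.pi*τ.im/4) * ((n:ℝ)^2 - 9)) := by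
    intro n
    have hn4 : n % 4 + 4 * (n / 4) = n := Int.emod_add_mul_ediv n 4
    set r : ℤ := n % 4 with hr
    set k : ℤ := n / 4 with hk
    have hr0 : 0 ≤ r := Int.emod_nonneg n (by norm_num)
    have hr3 : r < 4 := Int.emod_lt_of_pos n (by norm_num)
    have h1 : ‖a n‖ = ‖a r‖ * Real.exp (((2*k^2 + k*r : ℤ):ℝ) * (-2*Real.pi*τ.im)) := by
      rw [← hn4, hkey k r, norm_mul, hqnorm]
    have hCr : ‖a r‖ ≤ C := by
      have : r = 0 ∨ r = 1 ∨ r = 2 ∨ r = 3 := by omega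
      rcases this with h | h | h | h <;> rw [h]
      · exact le_trans (le_max_left _ _) (le_max_left _ _)
      · exact le_trans (le_max_right _ _) (le_max_left _ _)
      · exact le_trans (le_max_left _ _) (le_max_right _ _)
      · exact le_trans (le_max_right _ _) (le_max_right _ _)
    have hE : ((n:ℝ)^2 - 9)/8 ≤ ((2*k^2 + k*r : ℤ):ℝ) := by
      have hnr : (n:ℝ) = (r:ℝ) + 4*(k:ℝ) := by exact_mod_cast hn4.symm
      have hr0' : (0:ℝ) ≤ (r:ℝ) := by exact_mod_cast hr0
      have hr3' : (r:ℝ) ≤ 3 := by exact_mod_cast (by omega : r ≤ 3)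
      push_cast
      rw [hnr]
      nlinarith [sq_nonneg ((k:ℝ)), sq_nonneg ((r:ℝ))]
    have hexp : Real.exp (((2*k^2 + k*r : ℤ):ℝ) * (-2*Real.pi*τ.im))
        ≤ Real.exp (-(Real.pi*τ.im/4) * ((n:ℝ)^2 - 9)) := by
      apply Real.exp_le_exp.mpr
      have hπt : 0 < Real.pi * τ.im := mul_pos Real.pi_pos hτ
      nlinarith [hE]
    calc ‖a n‖ = ‖a r‖ * Real.exp (((2*k^2 + k*r : ℤ):ℝ) * (-2*Real.pi*τ.im)) := h1
      _ ≤ C * Real.exp (-(Real.pi*τ.im/4) * ((n:ℝ)^2 - 9)) :=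
        mul_le_mul hCr hexp (Real.exp_pos _).le hC0
  have hsumm : ∀ c : ℝ, Summable (fun n : ℤ => ‖a n‖ * Real.exp (c * (n:ℝ))) := by
    intro c
    have hτ' : (0:ℝ) < (((τ.im/4 : ℝ):ℂ) * I).im := by
      rw [Complex.mul_I_im, Complex.ofReal_re]
      positivity
    have hsum0 : Summable (fun n : ℤ => jacobiTheta₂_term n (((-c/(2*Real.pi) : ℝ):ℂ) * I) (((τ.im/4 : ℝ):ℂ) * I)) :=
      (summable_jacobiTheta₂_term_iff _ _).mpr hτ'
    have hsum1 : Summable (fun n : ℤ => (C * Real.exp (9*(Real.pi*τ.im)/4)) *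
        ‖jacobiTheta₂_term n (((-c/(2*Real.pi) : ℝ):ℂ) * I) (((τ.im/4 : ℝ):ℂ) * I)‖) :=
      (summable_norm_iff.mpr hsum0).mul_left _
    refine Summable.of_nonneg_of_le (fun n => by positivity) (fun n => ?_) hsum1
    rw [norm_jacobiTheta₂_term]
    have him1 : (((τ.im/4 : ℝ):ℂ) * I).im = τ.im/4 := by rw [Complex.mul_I_im, Complex.ofReal_re]
    have him2 : ((((-c/(2*Real.pi)) : ℝ):ℂ) * I).im = -c/(2*Real.pi) := by rw [Complex.mul_I_im, Complex.ofReal_re]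
    rw [him1, him2]
    have harg : -Real.pi * (n:ℝ)^2 * (τ.im/4) - 2*Real.pi*(n:ℝ)*(-c/(2*Real.pi))
        = -(Real.pi*τ.im/4) * ((n:ℝ)^2) + c * (n:ℝ) := by
      field_simp
      ring
    rw [harg]
    calc ‖a n‖ * Real.exp (c * (n:ℝ))
        ≤ (C * Real.exp (-(Real.pi*τ.im/4) * ((n:ℝ)^2 - 9))) * Real.exp (c * (n:ℝ)) := by
          apply mul_le_mul_of_nonneg_right (hbound n) (Real.exp_pos _).le
      _ = C * Real.exp (9*(Real.pi*τ.im)/4) * Real.exp (-(Real.pi*τ.im/4) * (n:ℝ)^2 + c * (n:ℝ)) := by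
          rw [mul_assoc, ← Real.exp_add, mul_assoc, ← Real.exp_add]
          congr 2
          ring
  -- continuous maps on the circle
  have hlift : ∀ y : ℝ, Function.Periodic (fun t : ℝ => f (t + y*I)) Real.pi := by
    intro y t
    simp only []
    have : ((t + Real.pi : ℝ) : ℂ) + y*I = ((t:ℂ) + y*I) + (Real.pi:ℂ) := by push_cast; ring
    rw [this, hfper]
  have hcont : ∀ y : ℝ, Continuous (fun t : ℝ => f ((t:ℂ) + y*I)) := by
    intro y
    exact hf.continuous.comp (Complex.continuous_ofReal.add continuous_const)
  set G : ℝ → C(AddCircle Real.pi, ℂ) := fun y =>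
    ⟨(hlift y).lift, by
      rw [(QuotientAddGroup.isQuotientMap_mk _).continuous_iff]
      exact hcont y⟩ with hGdef
  have hGcoe : ∀ (y t : ℝ), (G y) ((t : ℝ) : AddCircle Real.pi) = f ((t:ℂ) + y*I) := by
    intro y t
    rfl
  have hGcoeff : ∀ (y : ℝ) (n : ℤ),
      fourierCoeff (⇑(G y)) n = Complex.exp ((2*I*(n:ℂ))*((y:ℂ)*I)) * a n := by
    intro y n
    rw [fourierCoeff_eq_intervalIntegral _ n 0, zero_add]
    have hint : (∫ t in (0:ℝ)..Real.pi, (fourier (-n) ((t:ℝ) : AddCircle Real.pi) : ℂ) • (G y) ((t:ℝ) : AddCircle Real.pi))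
        = Complex.exp ((2*I*(n:ℂ))*((y:ℂ)*I)) * J n y := by
      rw [← intervalIntegral.integral_const_mul]
      refine intervalIntegral.integral_congr fun t _ => ?_
      rw [hGcoe, fourier_coe_apply, smul_eq_mul]
      rw [show 2 * (Real.pi:ℂ) * I * ((-n : ℤ):ℂ) * (t:ℂ) / (Real.pi:ℂ)
          = -(2 * I * (n:ℂ)) * (t:ℂ) by field_simp; push_cast; ring]
      rw [show -(2 * I * (n:ℂ)) * (t:ℂ)
          = (2*I*(n:ℂ))*((y:ℂ)*I) + (-(2*I*(n:ℂ)) * ((t:ℂ) + (y:ℂ)*I)) by ring,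
        Complex.exp_add]
      ring
    rw [hint, hJconst n y, hadef]
    simp only []
    rw [Complex.real_smul]
    push_cast
    ring
  have hMaster : ∀ z : ℂ, HasSum (fun n : ℤ => a n * Complex.exp (2*I*(n:ℂ)*z)) (f z) := by
    intro z
    have hsummable : Summable (fourierCoeff (⇑(G z.im))) := by
      apply Summable.of_norm
      refine (hsumm (-2*z.im)).congr fun n => ?_
      rw [hGcoeff]
      conv_rhs => rw [norm_mul, Complex.norm_exp]
      have hre : ((2*I*(n:ℂ))*((z.im:ℂ)*I)).re = -2*z.im*(n:ℝ) := by
        rw [show (2*I*(n:ℂ))*((z.im:ℂ)*I) = (((-2*z.im*(n:ℝ)) : ℝ) : ℂ) by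
          rw [show (2:ℂ)*I*(n:ℂ)*((z.im:ℂ)*I) = (z.im:ℂ)*(n:ℂ)*2*(I*I) by ring,
            Complex.I_mul_I]
          push_cast
          ring, Complex.ofReal_re]
      rw [hre, mul_comm ‖a n‖]
    have H := has_pointwise_sum_fourier_series_of_summable hsummable ((z.re : ℝ) : AddCircle Real.pi)
    rw [hGcoe z.im z.re] at H
    have hz : (z.re : ℂ) + (z.im:ℂ)*I = z := Complex.re_add_im z
    rw [hz] at H
    refine H.congr_fun fun n => ?_
    rw [hGcoeff, fourier_coe_apply, smul_eq_mul]
    rw [show 2 * (Real.pi:ℂ) * I * (n:ℂ) * (z.re:ℂ) / (Real.pi:ℂ) = 2 * I * (n:ℂ) * (z.re:ℂ) by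
      field_simp]
    have harg : 2 * I * (n:ℂ) * z = 2*I*(n:ℂ)*((z.im:ℂ)*I) + 2*I*(n:ℂ)*(z.re:ℂ) := by
      conv_lhs => rw [← hz]
      ring
    rw [harg, Complex.exp_add]
    ring
  -- the half-period multiplier
  set sh : ℂ := Complex.exp ((Real.pi:ℂ) * I * τ) with hshdef
  have hs0 : sh ≠ 0 := Complex.exp_ne_zero _
  have hs2 : sh * sh = q := by
    rw [hshdef, hq, ← Complex.exp_add]; congr 1; ring
  have hsn : ∀ n : ℤ, Complex.exp (2*I*(n:ℂ)*((Real.pi:ℂ)*τ/2)) = sh ^ n := by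
    intro n
    rw [show 2*I*(n:ℂ)*((Real.pi:ℂ)*τ/2) = (n:ℂ)*((Real.pi:ℂ)*I*τ) by ring, Complex.exp_int_mul,
      hshdef]
  have hneg1 : ∀ n : ℤ, Complex.exp (2*I*(n:ℂ)*((Real.pi:ℂ)/2)) = (-1 : ℂ) ^ n := by
    intro n
    rw [show 2*I*(n:ℂ)*((Real.pi:ℂ)/2) = (n:ℂ)*((Real.pi:ℂ)*I) by ring, Complex.exp_int_mul,
      Complex.exp_pi_mul_I]
  have hmix : ∀ n : ℤ, Complex.exp (2*I*(n:ℂ)*(((Real.pi:ℂ) + (Real.pi:ℂ)*τ)/2))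
      = (-1 : ℂ)^n * sh^n := by
    intro n
    rw [show 2*I*(n:ℂ)*(((Real.pi:ℂ)+(Real.pi:ℂ)*τ)/2)
        = (n:ℂ)*((Real.pi:ℂ)*I) + (n:ℂ)*((Real.pi:ℂ)*I*τ) by ring,
      Complex.exp_add, Complex.exp_int_mul, Complex.exp_int_mul, Complex.exp_pi_mul_I, hshdef]
  set u : ℤ → ℂ := fun n => a n * (1 - (-1 : ℂ)^n) with hudef
  have hinv : ∀ n : ℤ, sh ^ (n+1) * u n = u (-2 - n) := by
    intro n
    rcases Int.even_or_odd n with he | ho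
    · have h1 : ((-1:ℂ))^n = 1 := he.neg_one_zpow
      have h2 : ((-1:ℂ))^(-2-n) = 1 := by
        obtain ⟨m, hm⟩ := he
        exact Even.neg_one_zpow ⟨-1-m, by omega⟩
      simp only [hudef, h1, h2, sub_self, mul_zero]
    · obtain ⟨m, hm⟩ := ho
      have h1 : ((-1:ℂ))^n = -1 := Odd.neg_one_zpow ⟨m, hm⟩
      have h2 : ((-1:ℂ))^(-2-n) = -1 := Odd.neg_one_zpow ⟨-m-2, by omega⟩
      have ha : a (-2-n) = a n * q ^ (m+1) := by
        have hk := hkey (-(m+1)) n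
        rw [show n + 4*(-(m+1)) = -2 - n by omega] at hk
        rw [hk]
        congr 1
        have : 2*(-(m+1))^2 + (-(m+1))*n = m+1 := by rw [hm]; ring
        rw [this]
      have hsq : sh ^ (n+1) = q ^ (m+1) := by
        rw [← hs2, mul_zpow, ← zpow_add₀ hs0]
        congr 1
        omega
      simp only [hudef, h1, h2]
      rw [ha, hsq]
      ring
  have hsu : Summable u := by
    apply Summable.of_norm
    have h0 : Summable (fun n : ℤ => 2 * (‖a n‖ * Real.exp (0 * (n:ℝ)))) := (hsumm 0).mul_left 2
    refine Summable.of_nonneg_of_le (fun n => norm_nonneg _) (fun n => ?_) h0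
    rw [hudef]
    simp only []
    rw [norm_mul, zero_mul, Real.exp_zero, mul_one, mul_comm (2:ℝ)]
    apply mul_le_mul_of_nonneg_left _ (norm_nonneg _)
    calc ‖1 - (-1:ℂ)^n‖ ≤ ‖(1:ℂ)‖ + ‖(-1:ℂ)^n‖ := norm_sub_le _ _
      _ = 2 := by rw [norm_zpow, norm_one, norm_neg, norm_one, one_zpow]; norm_num
  have hTot : HasSum (fun n : ℤ => u n - u (-2 - n))
      (f 0 - f ((Real.pi:ℂ)/2) + sh * f (((Real.pi:ℂ)+(Real.pi:ℂ)*τ)/2) - sh * f ((Real.pi:ℂ)*τ/2)) := by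
    have hcomb := (((hMaster 0).sub (hMaster ((Real.pi:ℂ)/2))).add
      ((hMaster (((Real.pi:ℂ)+(Real.pi:ℂ)*τ)/2)).mul_left sh)).sub
      ((hMaster ((Real.pi:ℂ)*τ/2)).mul_left sh)
    refine HasSum.congr_fun hcomb ?_
    intro n
    rw [hneg1, hsn, hmix, mul_zero, Complex.exp_zero]
    rw [← hinv n, zpow_add₀ hs0, zpow_one, hudef]
    ring
  have hzero : HasSum (fun n : ℤ => u n - u (-2 - n)) 0 := by
    have hU := hsu.hasSum
    have hUcomp : HasSum (fun n : ℤ => u (-2 - n)) (∑' n, u n) := by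
      have hiff := (Equiv.subLeft (-2 : ℤ)).hasSum_iff (f := u) (a := ∑' n, u n)
      exact hiff.mpr hU
    simpa using hU.sub hUcomp
  have := hTot.unique hzero
  exact this
end

section
/- Let τ have positive imaginary part and let θ₁, θ₂, θ₃, θ₄ be the four Jacobi theta functions with nome q = exp(2πiτ). If y₁ + y₂ + y₃ + y₄ = 0, then θ₁(y₁|τ)θ₁(y₂|τ)θ₁(y₃|τ)θ₁(y₄|τ) - θ₂(y₁|τ)θ₂(y₂|τ)θ₂(y₃|τ)θ₂(y₄|τ) + θ₃(y₁|τ)θ₃(y₂|τ)θ₃(y₃|τ)θ₃(y₄|τ) - θ₄(y₁|τ)θ₄(y₂|τ)θ₄(y₃|τ)θ₄(y₄|τ) = 0. -/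
open Complex

/-- The first Jacobi theta function
`θ₁(z|τ) = 2 ∑_{n≥0} (-1)^n q^{(2n+1)²/8} sin((2n+1)z)` with `q = exp(2πiτ)`,
so that `q^{(2n+1)²/8} = exp(π i τ (2n+1)²/4)`. -/
noncomputable def theta1 (z τ : ℂ) : ℂ :=
  2 * ∑' n : ℕ, (-1 : ℂ) ^ n *
    Complex.exp (Real.pi * Complex.I * τ * (2 * n + 1) ^ 2 / 4) *
    Complex.sin ((2 * n + 1) * z)


/-- The second Jacobi theta function. -/
noncomputable def theta2 (z τ : ℂ) : ℂ :=
  2 * ∑' n : ℕ, Complex.exp (Real.pi * Complex.I * τ * (2 * n + 1) ^ 2 / 4) *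
    Complex.cos ((2 * n + 1) * z)

/-- The third Jacobi theta function; `q^{n²/2} = exp(π i τ n²)`. -/
noncomputable def theta3 (z τ : ℂ) : ℂ :=
  1 + 2 * ∑' n : ℕ, Complex.exp (Real.pi * Complex.I * τ * (n + 1) ^ 2) *
    Complex.cos (2 * (n + 1) * z)

/-- The fourth Jacobi theta function. -/
noncomputable def theta4 (z τ : ℂ) : ℂ :=
  1 + 2 * ∑' n : ℕ, (-1 : ℂ) ^ (n + 1) *
    Complex.exp (Real.pi * Complex.I * τ * (n + 1) ^ 2) *
    Complex.cos (2 * (n + 1) * z)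

namespace ThetaAux

noncomputable def Q (τ z a : ℂ) : ℂ :=
  Complex.exp (Real.pi * Complex.I * τ * a ^ 2 + 2 * Complex.I * a * z)

noncomputable def sg (s : ℤ) : ℂ := if Even s then 1 else -1

lemma sg_even {s : ℤ} (h : Even s) : sg s = 1 := if_pos h

lemma sg_odd {s : ℤ} (h : Odd s) : sg s = -1 := if_neg (Int.not_even_iff_odd.mpr h)

lemma sg_add (a b : ℤ) : sg (a + b) = sg a * sg b := by
  unfold sg
  by_cases ha : Even a <;> by_cases hb : Even b <;>
    simp [Int.even_add, ha, hb]

lemma sg_neg (s : ℤ) : sg (-s) = sg s := by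
  unfold sg; simp

lemma sg_natCast (n : ℕ) : sg n = (-1 : ℂ) ^ n := by
  unfold sg
  by_cases h : Even n
  · rw [if_pos (by exact_mod_cast Int.even_coe_nat n |>.mpr h), h.neg_one_pow]
  · rw [if_neg (by simpa [Int.even_coe_nat] using h),
      (Nat.not_even_iff_odd.mp h).neg_one_pow]

lemma norm_sg (s : ℤ) : ‖sg s‖ = 1 := by
  unfold sg; split_ifs <;> simp

lemma Q_eq (τ z : ℂ) (h : ℂ) (n : ℤ) :
    Q τ z (n + h) = Complex.exp (Real.pi * Complex.I * τ * h ^ 2 + 2 * Complex.I * h * z) *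
      jacobiTheta₂_term n (τ * h + z / Real.pi) τ := by
  have hπ : (Real.pi : ℂ) ≠ 0 := by
    exact_mod_cast Real.pi_ne_zero
  rw [Q, jacobiTheta₂_term, ← Complex.exp_add]
  congr 1
  field_simp
  ring

lemma summable_Q {τ : ℂ} (hτ : 0 < τ.im) (z h : ℂ) :
    Summable fun n : ℤ => Q τ z (n + h) := by
  simp only [Q_eq]
  exact ((summable_jacobiTheta₂_term_iff _ τ).mpr hτ).mul_left _

lemma summable_norm_Q {τ : ℂ} (hτ : 0 < τ.im) (z h : ℂ) :
    Summable fun n : ℤ => ‖Q τ z (n + h)‖ :=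
  summable_norm_iff.mpr (summable_Q hτ z h)

lemma summable_sg_Q {τ : ℂ} (hτ : 0 < τ.im) (z h : ℂ) :
    Summable fun n : ℤ => sg n * Q τ z (n + h) := by
  apply Summable.of_norm
  refine (summable_norm_Q hτ z h).congr fun n => ?_
  rw [norm_mul, norm_sg, one_mul]

lemma summable_norm_sg_Q {τ : ℂ} (hτ : 0 < τ.im) (z h : ℂ) :
    Summable fun n : ℤ => ‖sg n * Q τ z (n + h)‖ := by
  refine (summable_norm_Q hτ z h).congr fun n => ?_
  rw [norm_mul, norm_sg, one_mul]

lemma Q_add_neg (τ z a : ℂ) :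
    Q τ z a + Q τ z (-a) = 2 * Complex.exp (Real.pi * Complex.I * τ * a ^ 2) *
      Complex.cos (2 * a * z) := by
  have h2 := Complex.two_cos (x := 2 * a * z)
  calc Q τ z a + Q τ z (-a)
      = Complex.exp (Real.pi * Complex.I * τ * a ^ 2) *
        (Complex.exp (2 * a * z * Complex.I) + Complex.exp (-(2 * a * z) * Complex.I)) := by
        rw [mul_add, ← Complex.exp_add, ← Complex.exp_add, Q, Q]
        congr 2 <;> ring
    _ = _ := by rw [← h2]; ring

lemma Q_sub_neg (τ z a : ℂ) :
    Q τ z a - Q τ z (-a) = 2 * Complex.I * Complex.exp (Real.pi * Complex.I * τ * a ^ 2) *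
      Complex.sin (2 * a * z) := by
  have h2 := Complex.two_sin (x := 2 * a * z)
  calc Q τ z a - Q τ z (-a)
      = Complex.exp (Real.pi * Complex.I * τ * a ^ 2) *
        (Complex.exp (2 * a * z * Complex.I) - Complex.exp (-(2 * a * z) * Complex.I)) := by
        rw [mul_sub, ← Complex.exp_add, ← Complex.exp_add, Q, Q]
        congr 2 <;> ring
    _ = _ := by
        have : Complex.exp (2 * a * z * Complex.I) - Complex.exp (-(2 * a * z) * Complex.I)
            = 2 * Complex.I * Complex.sin (2 * a * z) := by
          linear_combination (-Complex.I) * h2 +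
            (Complex.exp (2 * a * z * Complex.I) - Complex.exp (-(2 * a * z) * Complex.I)) *
              Complex.I_sq
        rw [this]; ring

section expansions

variable {τ : ℂ} (hτ : 0 < τ.im) (z : ℂ)

lemma neg_inj' : Function.Injective fun n : ℕ => (-((n : ℤ) + 1) : ℤ) := by
  intro a b h
  have h' : -((a:ℤ) + 1) = -((b:ℤ) + 1) := h
  omega

lemma succ_inj' : Function.Injective fun n : ℕ => ((n : ℤ) + 1) := by
  intro a b h
  have h' : ((a:ℤ) + 1) = ((b:ℤ) + 1) := h
  omega

include hτ

lemma tsum_theta3 : ∑' n : ℤ, Q τ z n = theta3 z τ := by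
  set f : ℤ → ℂ := fun n => Q τ z n with hf
  have hS : Summable f := (summable_Q hτ z 0).congr fun n => by rw [add_zero]
  have h1 : Summable fun n : ℕ => f n := hS.comp_injective Nat.cast_injective
  have h2 : Summable fun n : ℕ => f (-((n : ℤ) + 1)) := hS.comp_injective neg_inj'
  have h3 : Summable fun n : ℕ => f ((n : ℤ) + 1) := hS.comp_injective succ_inj'
  have key : ∀ n : ℕ, f ((n : ℤ) + 1) + f (-((n : ℤ) + 1)) =
      2 * (Complex.exp (Real.pi * Complex.I * τ * ((n : ℂ) + 1) ^ 2) *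
        Complex.cos (2 * ((n : ℂ) + 1) * z)) := by
    intro n
    have e1 : (((n : ℤ) + 1 : ℤ) : ℂ) = (n : ℂ) + 1 := by push_cast; ring
    have e2 : ((-((n : ℤ) + 1) : ℤ) : ℂ) = -((n : ℂ) + 1) := by push_cast; ring
    rw [hf]
    simp only [e1, e2]
    rw [Q_add_neg]
    ring
  have h0 : f 0 = 1 := by simp [hf, Q]
  calc ∑' n : ℤ, f n = (∑' n : ℕ, f n) + ∑' n : ℕ, f (-((n : ℤ) + 1)) :=
        tsum_of_nat_of_neg_add_one h1 h2
    _ = f 0 + ((∑' n : ℕ, f ((n : ℤ) + 1)) + ∑' n : ℕ, f (-((n : ℤ) + 1))) := by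
        rw [Summable.tsum_eq_zero_add h1]
        have e : ∀ b : ℕ, f (((b + 1 : ℕ) : ℤ)) = f ((b : ℤ) + 1) := fun b => by norm_num
        rw [tsum_congr e, Nat.cast_zero, add_assoc]
    _ = f 0 + ∑' n : ℕ, (f ((n : ℤ) + 1) + f (-((n : ℤ) + 1))) := by
        rw [Summable.tsum_add h3 h2]
    _ = 1 + 2 * ∑' n : ℕ, Complex.exp (Real.pi * Complex.I * τ * ((n : ℂ) + 1) ^ 2) *
          Complex.cos (2 * ((n : ℂ) + 1) * z) := by
        rw [h0, tsum_congr key, tsum_mul_left]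
    _ = theta3 z τ := by rw [theta3]

lemma tsum_theta4 : ∑' n : ℤ, sg n * Q τ z n = theta4 z τ := by
  set f : ℤ → ℂ := fun n => sg n * Q τ z n with hf
  have hS : Summable f := (summable_sg_Q hτ z 0).congr fun n => by rw [add_zero]
  have h1 : Summable fun n : ℕ => f n := hS.comp_injective Nat.cast_injective
  have h2 : Summable fun n : ℕ => f (-((n : ℤ) + 1)) := hS.comp_injective neg_inj'
  have h3 : Summable fun n : ℕ => f ((n : ℤ) + 1) := hS.comp_injective succ_inj'
  have key : ∀ n : ℕ, f ((n : ℤ) + 1) + f (-((n : ℤ) + 1)) =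
      2 * ((-1 : ℂ) ^ ((n : ℕ) + 1) *
        Complex.exp (Real.pi * Complex.I * τ * ((n : ℂ) + 1) ^ 2) *
        Complex.cos (2 * ((n : ℂ) + 1) * z)) := by
    intro n
    have e1 : (((n : ℤ) + 1 : ℤ) : ℂ) = (n : ℂ) + 1 := by push_cast; ring
    have e2 : ((-((n : ℤ) + 1) : ℤ) : ℂ) = -((n : ℂ) + 1) := by push_cast; ring
    have es : sg (-((n : ℤ) + 1)) = sg ((n : ℤ) + 1) := sg_neg _
    have es2 : sg ((n : ℤ) + 1) = (-1 : ℂ) ^ ((n : ℕ) + 1) := by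
      rw [show ((n : ℤ) + 1) = (((n + 1 : ℕ) : ℤ)) by push_cast; ring, sg_natCast]
    rw [hf]
    simp only [e1, e2, es, es2]
    rw [show (-1 : ℂ) ^ ((n : ℕ) + 1) * Q τ z ((n : ℂ) + 1) +
        (-1 : ℂ) ^ ((n : ℕ) + 1) * Q τ z (-((n : ℂ) + 1)) =
        (-1 : ℂ) ^ ((n : ℕ) + 1) * (Q τ z ((n : ℂ) + 1) + Q τ z (-((n : ℂ) + 1))) by ring,
      Q_add_neg]
    ring
  have h0 : f 0 = 1 := by simp [hf, Q, sg]
  calc ∑' n : ℤ, f n = (∑' n : ℕ, f n) + ∑' n : ℕ, f (-((n : ℤ) + 1)) :=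
        tsum_of_nat_of_neg_add_one h1 h2
    _ = f 0 + ((∑' n : ℕ, f ((n : ℤ) + 1)) + ∑' n : ℕ, f (-((n : ℤ) + 1))) := by
        rw [Summable.tsum_eq_zero_add h1]
        have e : ∀ b : ℕ, f (((b + 1 : ℕ) : ℤ)) = f ((b : ℤ) + 1) := fun b => by norm_num
        rw [tsum_congr e, Nat.cast_zero, add_assoc]
    _ = f 0 + ∑' n : ℕ, (f ((n : ℤ) + 1) + f (-((n : ℤ) + 1))) := by
        rw [Summable.tsum_add h3 h2]
    _ = 1 + 2 * ∑' n : ℕ, (-1 : ℂ) ^ ((n : ℕ) + 1) *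
          Complex.exp (Real.pi * Complex.I * τ * ((n : ℂ) + 1) ^ 2) *
          Complex.cos (2 * ((n : ℂ) + 1) * z) := by
        rw [h0, tsum_congr key, tsum_mul_left]
    _ = theta4 z τ := by rw [theta4]

lemma tsum_theta2 : ∑' n : ℤ, Q τ z (n + 1/2) = theta2 z τ := by
  set f : ℤ → ℂ := fun n => Q τ z (n + 1/2) with hf
  have hS : Summable f := summable_Q hτ z (1/2)
  have h1 : Summable fun n : ℕ => f n := hS.comp_injective Nat.cast_injective
  have h2 : Summable fun n : ℕ => f (-((n : ℤ) + 1)) := hS.comp_injective neg_inj'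
  have key : ∀ n : ℕ, f (n : ℕ) + f (-((n : ℤ) + 1)) =
      2 * (Complex.exp (Real.pi * Complex.I * τ * (2 * (n : ℂ) + 1) ^ 2 / 4) *
        Complex.cos ((2 * (n : ℂ) + 1) * z)) := by
    intro n
    have e1 : ((((n : ℕ) : ℤ)) : ℂ) + 1/2 = (n : ℂ) + 1/2 := by push_cast; ring
    have e2 : ((-((n : ℤ) + 1) : ℤ) : ℂ) + 1/2 = -((n : ℂ) + 1/2) := by push_cast; ring
    rw [hf]
    simp only [e1, e2]
    rw [Q_add_neg]
    have a1 : Real.pi * Complex.I * τ * ((n : ℂ) + 1/2) ^ 2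
        = Real.pi * Complex.I * τ * (2 * (n : ℂ) + 1) ^ 2 / 4 := by ring
    have a2 : 2 * ((n : ℂ) + 1/2) * z = (2 * (n : ℂ) + 1) * z := by ring
    rw [a1, a2]
    ring
  calc ∑' n : ℤ, f n = (∑' n : ℕ, f n) + ∑' n : ℕ, f (-((n : ℤ) + 1)) :=
        tsum_of_nat_of_neg_add_one h1 h2
    _ = ∑' n : ℕ, (f (n : ℕ) + f (-((n : ℤ) + 1))) := by rw [Summable.tsum_add h1 h2]
    _ = 2 * ∑' n : ℕ, Complex.exp (Real.pi * Complex.I * τ * (2 * (n : ℂ) + 1) ^ 2 / 4) *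
          Complex.cos ((2 * (n : ℂ) + 1) * z) := by
        rw [tsum_congr key, tsum_mul_left]
    _ = theta2 z τ := by rw [theta2]

lemma tsum_theta1 : ∑' n : ℤ, sg n * Q τ z (n + 1/2) = Complex.I * theta1 z τ := by
  set f : ℤ → ℂ := fun n => sg n * Q τ z (n + 1/2) with hf
  have hS : Summable f := summable_sg_Q hτ z (1/2)
  have h1 : Summable fun n : ℕ => f n := hS.comp_injective Nat.cast_injective
  have h2 : Summable fun n : ℕ => f (-((n : ℤ) + 1)) := hS.comp_injective neg_inj'
  have key : ∀ n : ℕ, f (n : ℕ) + f (-((n : ℤ) + 1)) =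
      Complex.I * (2 * ((-1 : ℂ) ^ (n : ℕ) *
        Complex.exp (Real.pi * Complex.I * τ * (2 * (n : ℂ) + 1) ^ 2 / 4) *
        Complex.sin ((2 * (n : ℂ) + 1) * z))) := by
    intro n
    have e1 : ((((n : ℕ) : ℤ)) : ℂ) + 1/2 = (n : ℂ) + 1/2 := by push_cast; ring
    have e2 : ((-((n : ℤ) + 1) : ℤ) : ℂ) + 1/2 = -((n : ℂ) + 1/2) := by push_cast; ring
    have es : sg (-((n : ℤ) + 1)) = -sg ((n : ℕ) : ℤ) := by
      rw [sg_neg ((n : ℤ) + 1), sg_add]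
      have : sg 1 = -1 := by norm_num [sg]
      rw [this]; ring
    rw [hf]
    simp only [e1, e2, es, sg_natCast]
    have key2 := Q_sub_neg τ z ((n : ℂ) + 1/2)
    have a1 : Real.pi * Complex.I * τ * ((n : ℂ) + 1/2) ^ 2
        = Real.pi * Complex.I * τ * (2 * (n : ℂ) + 1) ^ 2 / 4 := by ring
    have a2 : 2 * ((n : ℂ) + 1/2) * z = (2 * (n : ℂ) + 1) * z := by ring
    calc (-1 : ℂ) ^ (n : ℕ) * Q τ z ((n : ℂ) + 1/2) +
          -(-1 : ℂ) ^ (n : ℕ) * Q τ z (-((n : ℂ) + 1/2))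
        = (-1 : ℂ) ^ (n : ℕ) * (Q τ z ((n : ℂ) + 1/2) - Q τ z (-((n : ℂ) + 1/2))) := by ring
      _ = _ := by rw [key2, a1, a2]; ring
  calc ∑' n : ℤ, f n = (∑' n : ℕ, f n) + ∑' n : ℕ, f (-((n : ℤ) + 1)) :=
        tsum_of_nat_of_neg_add_one h1 h2
    _ = ∑' n : ℕ, (f (n : ℕ) + f (-((n : ℤ) + 1))) := by rw [Summable.tsum_add h1 h2]
    _ = ∑' n : ℕ, Complex.I * (2 * ((-1 : ℂ) ^ (n : ℕ) *
          Complex.exp (Real.pi * Complex.I * τ * (2 * (n : ℂ) + 1) ^ 2 / 4) *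
          Complex.sin ((2 * (n : ℂ) + 1) * z))) := tsum_congr key
    _ = Complex.I * theta1 z τ := by
        rw [tsum_mul_left, tsum_mul_left, theta1]

end expansions

section products

abbrev K : Type := ((ℤ × ℤ) × ℤ) × ℤ

def ssum (k : K) : ℤ := k.1.1.1 + k.1.1.2 + k.1.2 + k.2

def phi (k : K) : K :=
  (((k.1.1.1 - (ssum k + 1) / 2, k.1.1.2 - (ssum k + 1) / 2), k.1.2 - (ssum k + 1) / 2),
    k.2 - (ssum k + 1) / 2)

lemma ssum_phi {k : K} (h : Odd (ssum k)) : ssum (phi k) = -(ssum k) - 2 := by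
  obtain ⟨u, hu⟩ := h
  obtain ⟨⟨⟨a, b⟩, c⟩, d⟩ := k
  simp only [ssum, phi] at *
  omega

lemma odd_ssum_phi {k : K} (h : Odd (ssum k)) : Odd (ssum (phi k)) := by
  rw [ssum_phi h]
  obtain ⟨u, hu⟩ := h
  exact ⟨-u - 2, by omega⟩

lemma phi_invol {k : K} (h : Odd (ssum k)) : phi (phi k) = k := by
  obtain ⟨u, hu⟩ := h
  obtain ⟨⟨⟨a, b⟩, c⟩, d⟩ := k
  simp only [ssum, phi, Prod.mk.injEq] at *
  refine ⟨⟨⟨?_, ?_⟩, ?_⟩, ?_⟩ <;> omega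

variable (τ y₁ y₂ y₃ y₄ : ℂ)

noncomputable def Hf (k : K) : ℂ :=
  Q τ y₁ (k.1.1.1 + 1/2) * Q τ y₂ (k.1.1.2 + 1/2) * Q τ y₃ (k.1.2 + 1/2) *
    Q τ y₄ (k.2 + 1/2)

noncomputable def Gf (k : K) : ℂ :=
  Q τ y₁ k.1.1.1 * Q τ y₂ k.1.1.2 * Q τ y₃ k.1.2 * Q τ y₄ k.2

noncomputable def Sf (k : K) : ℂ := sg (ssum k)

lemma Gf_ne_zero (k : K) : Gf τ y₁ y₂ y₃ y₄ k ≠ 0 := by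
  unfold Gf Q
  exact mul_ne_zero (mul_ne_zero (mul_ne_zero (Complex.exp_ne_zero _)
    (Complex.exp_ne_zero _)) (Complex.exp_ne_zero _)) (Complex.exp_ne_zero _)

lemma Q4_eq {u a b c d : ℂ} (h1 : a + b + c + d = 2 * u + 1)
    (h2 : y₁ + y₂ + y₃ + y₄ = 0) :
    Q τ y₁ (a - (u + 1) + 1/2) * Q τ y₂ (b - (u + 1) + 1/2) *
      Q τ y₃ (c - (u + 1) + 1/2) * Q τ y₄ (d - (u + 1) + 1/2)
    = Q τ y₁ a * Q τ y₂ b * Q τ y₃ c * Q τ y₄ d := by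
  unfold Q
  rw [← Complex.exp_add, ← Complex.exp_add, ← Complex.exp_add, ← Complex.exp_add,
    ← Complex.exp_add, ← Complex.exp_add]
  congr 1
  linear_combination (Real.pi * Complex.I * τ * (-(2*u + 1))) * h1 +
    (2 * Complex.I * (-(u + 1/2))) * h2

lemma Hf_phi_eq_Gf (h2 : y₁ + y₂ + y₃ + y₄ = 0) {k : K} (h : Odd (ssum k)) :
    Hf τ y₁ y₂ y₃ y₄ (phi k) = Gf τ y₁ y₂ y₃ y₄ k := by
  obtain ⟨u, hu⟩ := h
  obtain ⟨⟨⟨a, b⟩, c⟩, d⟩ := k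
  have hm : (ssum (((a, b), c), d) + 1) / 2 = u + 1 := by
    simp only [ssum] at *
    omega
  have hc : ((a : ℂ) + b + c + d) = 2 * u + 1 := by
    have : a + b + c + d = 2 * u + 1 := by simpa [ssum] using hu
    exact_mod_cast congrArg (Int.cast : ℤ → ℂ) this
  simp only [Hf, Gf, phi, hm]
  have e : ∀ x : ℤ, ((x - (u + 1) : ℤ) : ℂ) + 1/2 = (x : ℂ) - ((u : ℂ) + 1) + 1/2 := by
    intro x; push_cast; ring
  rw [e a, e b, e c, e d]
  exact Q4_eq τ y₁ y₂ y₃ y₄ hc h2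

lemma Sf_odd {k : K} (h : Odd (ssum k)) : Sf k = -1 := sg_odd h

lemma odd_of_mem_support {k : K} {v : K → ℂ} (h : (Sf k - 1) * v k ≠ 0) :
    Odd (ssum k) := by
  rw [← Int.not_even_iff_odd]
  intro he
  exact h (by rw [Sf, sg_even he]; ring)

lemma tsum_half_eq_int (h2 : y₁ + y₂ + y₃ + y₄ = 0) :
    ∑' k : K, (Sf k - 1) * Hf τ y₁ y₂ y₃ y₄ k
      = ∑' k : K, (Sf k - 1) * Gf τ y₁ y₂ y₃ y₄ k := by
  apply tsum_eq_tsum_of_ne_zero_bij (i := fun x => phi x.1)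
  · intro x x' hxx
    have hx : Odd (ssum x.1) := odd_of_mem_support x.2
    have hx' : Odd (ssum x'.1) := odd_of_mem_support x'.2
    have : phi (phi x.1) = phi (phi x'.1) := congrArg phi hxx
    rwa [phi_invol hx, phi_invol hx', ← Subtype.ext_iff] at this
  · intro k hk
    have hodd : Odd (ssum k) := odd_of_mem_support hk
    have hodd' : Odd (ssum (phi k)) := odd_ssum_phi hodd
    refine ⟨⟨phi k, ?_⟩, phi_invol hodd⟩
    simp only [Function.mem_support]
    intro hzero
    have hS : Sf (phi k) - 1 = -2 := by rw [Sf_odd hodd']; ring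
    rw [hS] at hzero
    exact Gf_ne_zero τ y₁ y₂ y₃ y₄ (phi k) (by
      have := mul_eq_zero.mp hzero
      rcases this with h | h
      · norm_num at h
      · exact h)
  · intro x
    have hx : Odd (ssum x.1) := odd_of_mem_support x.2
    have hodd' : Odd (ssum (phi x.1)) := odd_ssum_phi hx
    rw [Sf_odd hodd', Sf_odd hx, Hf_phi_eq_Gf τ y₁ y₂ y₃ y₄ h2 hx]

lemma tsum4 {f g p r : ℤ → ℂ} (hf : Summable fun n => ‖f n‖) (hg : Summable fun n => ‖g n‖)
    (hp : Summable fun n => ‖p n‖) (hr : Summable fun n => ‖r n‖) :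
    (∑' n : ℤ, f n) * (∑' n : ℤ, g n) * (∑' n : ℤ, p n) * (∑' n : ℤ, r n)
      = ∑' k : K, f k.1.1.1 * g k.1.1.2 * p k.1.2 * r k.2 := by
  rw [tsum_mul_tsum_of_summable_norm hf hg,
    tsum_mul_tsum_of_summable_norm (hf.mul_norm hg) hp,
    tsum_mul_tsum_of_summable_norm ((hf.mul_norm hg).mul_norm hp) hr]

lemma summable_norm4 {f g p r : ℤ → ℂ} (hf : Summable fun n => ‖f n‖)
    (hg : Summable fun n => ‖g n‖) (hp : Summable fun n => ‖p n‖)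
    (hr : Summable fun n => ‖r n‖) :
    Summable fun k : K => ‖f k.1.1.1 * g k.1.1.2 * p k.1.2 * r k.2‖ :=
  ((hf.mul_norm hg).mul_norm hp).mul_norm hr

end products

end ThetaAux

set_option maxHeartbeats 1000000 in
open ThetaAux in
theorem theta_product_relation (τ : ℂ) (hτ : 0 < τ.im)
    (y₁ y₂ y₃ y₄ : ℂ) (hsum : y₁ + y₂ + y₃ + y₄ = 0) :
    theta1 y₁ τ * theta1 y₂ τ * theta1 y₃ τ * theta1 y₄ τ -
      theta2 y₁ τ * theta2 y₂ τ * theta2 y₃ τ * theta2 y₄ τ +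
      theta3 y₁ τ * theta3 y₂ τ * theta3 y₃ τ * theta3 y₄ τ -
      theta4 y₁ τ * theta4 y₂ τ * theta4 y₃ τ * theta4 y₄ τ = 0 := by
  have sQ0 : ∀ z : ℂ, Summable fun n : ℤ => ‖Q τ z n‖ := fun z =>
    (summable_norm_Q hτ z 0).congr fun n => by rw [add_zero]
  have sQh : ∀ z : ℂ, Summable fun n : ℤ => ‖Q τ z ((n : ℂ) + 1/2)‖ := fun z =>
    summable_norm_Q hτ z (1/2)
  have sgQ0 : ∀ z : ℂ, Summable fun n : ℤ => ‖sg n * Q τ z n‖ := fun z =>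
    (summable_norm_sg_Q hτ z 0).congr fun n => by rw [add_zero]
  have sgQh : ∀ z : ℂ, Summable fun n : ℤ => ‖sg n * Q τ z ((n : ℂ) + 1/2)‖ := fun z =>
    summable_norm_sg_Q hτ z (1/2)
  -- the four product expansions
  have e3 : theta3 y₁ τ * theta3 y₂ τ * theta3 y₃ τ * theta3 y₄ τ
      = ∑' k : K, Gf τ y₁ y₂ y₃ y₄ k := by
    rw [← tsum_theta3 hτ y₁, ← tsum_theta3 hτ y₂, ← tsum_theta3 hτ y₃, ← tsum_theta3 hτ y₄]
    exact tsum4 (sQ0 y₁) (sQ0 y₂) (sQ0 y₃) (sQ0 y₄)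
  have e4 : theta4 y₁ τ * theta4 y₂ τ * theta4 y₃ τ * theta4 y₄ τ
      = ∑' k : K, Sf k * Gf τ y₁ y₂ y₃ y₄ k := by
    rw [← tsum_theta4 hτ y₁, ← tsum_theta4 hτ y₂, ← tsum_theta4 hτ y₃, ← tsum_theta4 hτ y₄,
      tsum4 (sgQ0 y₁) (sgQ0 y₂) (sgQ0 y₃) (sgQ0 y₄)]
    refine tsum_congr fun k => ?_
    obtain ⟨⟨⟨a, b⟩, c⟩, d⟩ := k
    simp only [Sf, Gf, ssum, sg_add]
    ring
  have e2 : theta2 y₁ τ * theta2 y₂ τ * theta2 y₃ τ * theta2 y₄ τ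
      = ∑' k : K, Hf τ y₁ y₂ y₃ y₄ k := by
    rw [← tsum_theta2 hτ y₁, ← tsum_theta2 hτ y₂, ← tsum_theta2 hτ y₃, ← tsum_theta2 hτ y₄]
    exact tsum4 (sQh y₁) (sQh y₂) (sQh y₃) (sQh y₄)
  have e1 : theta1 y₁ τ * theta1 y₂ τ * theta1 y₃ τ * theta1 y₄ τ
      = ∑' k : K, Sf k * Hf τ y₁ y₂ y₃ y₄ k := by
    have h₁ := tsum_theta1 hτ y₁
    have h₂ := tsum_theta1 hτ y₂
    have h₃ := tsum_theta1 hτ y₃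
    have h₄ := tsum_theta1 hτ y₄
    have hA : (∑' n : ℤ, sg n * Q τ y₁ ((n : ℂ) + 1/2)) *
        (∑' n : ℤ, sg n * Q τ y₂ ((n : ℂ) + 1/2)) *
        (∑' n : ℤ, sg n * Q τ y₃ ((n : ℂ) + 1/2)) *
        (∑' n : ℤ, sg n * Q τ y₄ ((n : ℂ) + 1/2))
        = theta1 y₁ τ * theta1 y₂ τ * theta1 y₃ τ * theta1 y₄ τ := by
      rw [h₁, h₂, h₃, h₄]
      linear_combination (theta1 y₁ τ * theta1 y₂ τ * theta1 y₃ τ * theta1 y₄ τ *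
        (Complex.I ^ 2 - 1)) * Complex.I_sq
    rw [← hA, tsum4 (sgQh y₁) (sgQh y₂) (sgQh y₃) (sgQh y₄)]
    refine tsum_congr fun k => ?_
    obtain ⟨⟨⟨a, b⟩, c⟩, d⟩ := k
    simp only [Sf, Hf, ssum, sg_add]
    ring
  -- summability over K
  have NH' := summable_norm4 (sQh y₁) (sQh y₂) (sQh y₃) (sQh y₄)
  have NG' := summable_norm4 (sQ0 y₁) (sQ0 y₂) (sQ0 y₃) (sQ0 y₄)
  have NH : Summable fun k : K => ‖Hf τ y₁ y₂ y₃ y₄ k‖ :=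
    NH'.congr fun k => by simp only [Hf]
  have NG : Summable fun k : K => ‖Gf τ y₁ y₂ y₃ y₄ k‖ :=
    NG'.congr fun k => by simp only [Gf]
  have NSH : Summable fun k : K => ‖Sf k * Hf τ y₁ y₂ y₃ y₄ k‖ :=
    NH.congr fun k => by rw [norm_mul, Sf, norm_sg, one_mul]
  have NSG : Summable fun k : K => ‖Sf k * Gf τ y₁ y₂ y₃ y₄ k‖ :=
    NG.congr fun k => by rw [norm_mul, Sf, norm_sg, one_mul]
  have hH : Summable fun k : K => Hf τ y₁ y₂ y₃ y₄ k := NH.of_norm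
  have hG : Summable fun k : K => Gf τ y₁ y₂ y₃ y₄ k := NG.of_norm
  have hSH : Summable fun k : K => Sf k * Hf τ y₁ y₂ y₃ y₄ k := NSH.of_norm
  have hSG : Summable fun k : K => Sf k * Gf τ y₁ y₂ y₃ y₄ k := NSG.of_norm
  have eH : (∑' k : K, Sf k * Hf τ y₁ y₂ y₃ y₄ k) - ∑' k : K, Hf τ y₁ y₂ y₃ y₄ k
      = ∑' k : K, (Sf k - 1) * Hf τ y₁ y₂ y₃ y₄ k := by
    rw [← Summable.tsum_sub hSH hH]
    exact tsum_congr fun k => by ring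
  have eG : (∑' k : K, Sf k * Gf τ y₁ y₂ y₃ y₄ k) - ∑' k : K, Gf τ y₁ y₂ y₃ y₄ k
      = ∑' k : K, (Sf k - 1) * Gf τ y₁ y₂ y₃ y₄ k := by
    rw [← Summable.tsum_sub hSG hG]
    exact tsum_congr fun k => by ring
  have key := tsum_half_eq_int τ y₁ y₂ y₃ y₄ hsum
  rw [e1, e2, e3, e4]
  linear_combination eH - eG + key
end

section
/- Let n be an odd positive integer, τ with Im τ > 0, and q = exp(2πiτ). Then ∑_{k=0}^{n-1} (-1)^k e^{2kπi/n} θ₁((kπ+πτ)/n | τ)^n = 0, where θ₁ is the first Jacobi theta function. -/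
open Complex

namespace ThetaAux

open Finset

variable {τ : ℂ} {n : ℕ}
noncomputable def E (τ m z : ℂ) : ℂ :=
  Complex.exp (Real.pi * Complex.I * τ * (2 * m + 1) ^ 2 / 4 + Real.pi * Complex.I * m
    + (2 * m + 1) * Complex.I * z)

lemma exp_two_pi_I_int (a : ℤ) : Complex.exp (2 * Real.pi * Complex.I * a) = 1 := by
  rw [show (2 * (Real.pi : ℂ) * Complex.I * a) = a * (2 * Real.pi * Complex.I) by ring]
  exact Complex.exp_int_mul_two_pi_mul_I a

lemma exp_pi_I_odd {a : ℤ} (ha : Odd a) : Complex.exp (Real.pi * Complex.I * a) = -1 := by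
  obtain ⟨w, rfl⟩ := ha
  push_cast
  rw [show ((Real.pi : ℂ) * Complex.I * (2 * w + 1)) =
      w * (2 * Real.pi * Complex.I) + Real.pi * Complex.I by ring,
    Complex.exp_add, Complex.exp_int_mul_two_pi_mul_I, one_mul, Complex.exp_pi_mul_I]

lemma E_eq_term (τ z : ℂ) (m : ℤ) :
    E τ (m : ℂ) z = Complex.exp (Real.pi * Complex.I * τ / 4 + Complex.I * z)
      * jacobiTheta₂_term m ((τ + 1) / 2 + z / Real.pi) τ := by
  have hπ : (Real.pi : ℂ) ≠ 0 := by exact_mod_cast Real.pi_ne_zero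
  rw [E, jacobiTheta₂_term, ← Complex.exp_add]
  congr 1
  field_simp
  ring

lemma summable_E {τ : ℂ} (hτ : 0 < τ.im) (z : ℂ) :
    Summable fun m : ℤ => E τ (m : ℂ) z := by
  have h := (summable_jacobiTheta₂_term_iff ((τ + 1) / 2 + z / Real.pi) τ).mpr hτ
  have := h.mul_left (Complex.exp (Real.pi * Complex.I * τ / 4 + Complex.I * z))
  simpa only [← E_eq_term] using this

lemma theta1_eq {τ : ℂ} (hτ : 0 < τ.im) (z : ℂ) :
    theta1 z τ = -Complex.I * ∑' m : ℤ, E τ (m : ℂ) z := by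
  have hs := summable_E hτ z
  rw [← tsum_nat_add_neg_add_one hs, theta1, ← tsum_mul_left, ← tsum_mul_left]
  refine tsum_congr fun m => ?_
  have h1 : Complex.exp (Real.pi * Complex.I * (m : ℂ)) = (-1 : ℂ) ^ m := by
    rw [show ((Real.pi : ℂ) * Complex.I * (m : ℂ)) = (m : ℂ) * (Real.pi * Complex.I) by ring,
      Complex.exp_nat_mul, Complex.exp_pi_mul_I]
  have e1 : E τ ((m : ℤ) : ℂ) z = (-1 : ℂ) ^ m *
      (Complex.exp (Real.pi * Complex.I * τ * (2 * (m : ℂ) + 1) ^ 2 / 4) *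
        Complex.exp ((2 * (m : ℂ) + 1) * Complex.I * z)) := by
    push_cast
    rw [E, Complex.exp_add, Complex.exp_add, h1]
    ring
  have e2 : E τ ((-((m : ℤ) + 1) : ℤ) : ℂ) z = -((-1 : ℂ) ^ m) *
      (Complex.exp (Real.pi * Complex.I * τ * (2 * (m : ℂ) + 1) ^ 2 / 4) *
        Complex.exp (-((2 * (m : ℂ) + 1) * Complex.I * z))) := by
    push_cast
    rw [E, Complex.exp_add, Complex.exp_add]
    have h2 : Complex.exp (Real.pi * Complex.I * (-((m : ℂ) + 1))) = -((-1 : ℂ) ^ m) := by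
      have : ((Real.pi : ℂ) * Complex.I * (-((m : ℂ) + 1))) =
          (-(m + 1) : ℤ) * (Real.pi * Complex.I) := by push_cast; ring
      rw [this, Complex.exp_int_mul, Complex.exp_pi_mul_I]
      rw [zpow_neg, show ((m : ℤ) + 1) = ((m + 1 : ℕ) : ℤ) by push_cast; ring, zpow_natCast,
        pow_succ]
      have hA : ((-1 : ℂ) ^ m) * ((-1 : ℂ) ^ m) = 1 := by
        rw [← pow_add]; exact Even.neg_one_pow ⟨m, rfl⟩
      exact inv_eq_of_mul_eq_one_right (by linear_combination hA)
    rw [h2]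
    ring
  rw [e1, e2, Complex.sin]
  ring_nf



set_option maxHeartbeats 1000000 in
lemma hasSum_prod {f : ℤ → ℂ} (hf : Summable f) (N : ℕ) :
    HasSum (fun v : Fin N → ℤ => ∏ t, f (v t)) ((∑' m, f m) ^ N) ∧
      Summable (fun v : Fin N → ℤ => ‖∏ t, f (v t)‖) := by
  induction N with
  | zero =>
    constructor
    · have h : HasSum (fun v : Fin 0 → ℤ => ∏ t, f (v t))
          ((fun v : Fin 0 → ℤ => ∏ t, f (v t)) (fun t => t.elim0)) :=
        hasSum_single _ (fun b hb => absurd (Subsingleton.elim b _) hb)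
      simpa using h
    · have h : HasSum (fun v : Fin 0 → ℤ => ‖∏ t, f (v t)‖)
          ((fun v : Fin 0 → ℤ => ‖∏ t, f (v t)‖) (fun t => t.elim0)) :=
        hasSum_single _ (fun b hb => absurd (Subsingleton.elim b _) hb)
      exact h.summable
  | succ N ihall =>
    obtain ⟨ih, ihn⟩ := ihall
    have hfn : Summable fun m => ‖f m‖ := summable_norm_iff.mpr hf
    have hmulnorm : Summable fun p : ℤ × (Fin N → ℤ) => ‖f p.1 * ∏ t, f (p.2 t)‖ :=
      Summable.mul_norm (f := f) (g := fun v : Fin N → ℤ => ∏ t, f (v t)) hfn ihn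
    have hmul : Summable fun p : ℤ × (Fin N → ℤ) => f p.1 * ∏ t, f (p.2 t) :=
      hmulnorm.of_norm
    have htsum : (∑' p : ℤ × (Fin N → ℤ), f p.1 * ∏ t, f (p.2 t)) = (∑' m, f m) ^ (N + 1) := by
      rw [← tsum_mul_tsum_of_summable_norm hfn ihn, ih.tsum_eq, pow_succ']
    have hS : HasSum (fun p : ℤ × (Fin N → ℤ) => f p.1 * ∏ t, f (p.2 t))
        ((∑' m, f m) ^ (N + 1)) := htsum ▸ hmul.hasSum
    have hfun : ((fun v : Fin (N + 1) → ℤ => ∏ t, f (v t)) ∘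
        (Fin.consEquiv (fun _ : Fin (N + 1) => ℤ))) =
        fun p : ℤ × (Fin N → ℤ) => f p.1 * ∏ t, f (p.2 t) := by
      funext p
      simp [Fin.consEquiv, Fin.prod_univ_succ]
    constructor
    · exact (Equiv.hasSum_iff (Fin.consEquiv (fun _ : Fin (N + 1) => ℤ))).mp (hfun ▸ hS)
    · have hfun2 : ((fun v : Fin (N + 1) → ℤ => ‖∏ t, f (v t)‖) ∘
          (Fin.consEquiv (fun _ : Fin (N + 1) => ℤ))) =
          fun p : ℤ × (Fin N → ℤ) => ‖f p.1 * ∏ t, f (p.2 t)‖ := by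
        funext p
        simp [Fin.consEquiv, Fin.prod_univ_succ]
      have := (Equiv.summable_iff (Fin.consEquiv (fun _ : Fin (N + 1) => ℤ))).mp
        (hfun2 ▸ hmulnorm)
      exact this



/-- The sum over `t` of the exponents appearing in a product of `E`'s. -/
lemma sum_arg (v : Fin n → ℤ) (z : ℂ) :
    ∑ t : Fin n, ((Real.pi : ℂ) * Complex.I * τ * (2 * (v t : ℂ) + 1) ^ 2 / 4 +
        Real.pi * Complex.I * (v t : ℂ) + (2 * (v t : ℂ) + 1) * Complex.I * z) =
      Real.pi * Complex.I * τ * (∑ t, (2 * (v t : ℂ) + 1) ^ 2) / 4 +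
        Real.pi * Complex.I * (∑ t, (v t : ℂ)) +
        (2 * (∑ t, (v t : ℂ)) + n) * Complex.I * z := by
  rw [Finset.sum_add_distrib, Finset.sum_add_distrib]
  congr 1
  · congr 1
    · rw [← Finset.sum_div, ← Finset.mul_sum]
    · rw [← Finset.mul_sum]
  · have h1 : ∀ t : Fin n, (2 * (v t : ℂ) + 1) * Complex.I * z
        = (2 * (v t : ℂ) + 1) * (Complex.I * z) := fun t => mul_assoc _ _ _
    rw [Finset.sum_congr rfl fun t _ => h1 t, ← Finset.sum_mul, Finset.sum_add_distrib,
      ← Finset.mul_sum, Finset.sum_const, Finset.card_univ, Fintype.card_fin, nsmul_eq_mul,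
      mul_one, mul_assoc]

lemma prod_E (v : Fin n → ℤ) (z : ℂ) :
    (∏ t, E τ (v t : ℂ) z) =
      Complex.exp (Real.pi * Complex.I * τ * (∑ t, (2 * (v t : ℂ) + 1) ^ 2) / 4 +
        Real.pi * Complex.I * (∑ t, (v t : ℂ)) +
        (2 * (∑ t, (v t : ℂ)) + n) * Complex.I * z) := by
  rw [← sum_arg, Complex.exp_sum]
  rfl




lemma bad_case (hn : 0 < n) (v : Fin n → ℤ) (hd : ¬ (n : ℤ) ∣ (∑ t, v t) + 1) :
    ∑ k ∈ Finset.range n, ((-1 : ℂ) ^ k * Complex.exp (2 * k * Real.pi * Complex.I / n) *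
      ((-Complex.I) ^ n * ∏ t, E τ (v t : ℂ) ((k * Real.pi + Real.pi * τ) / n))) = 0 := by
  have hπ : (Real.pi : ℂ) ≠ 0 := by exact_mod_cast Real.pi_ne_zero
  have hn0 : (n : ℂ) ≠ 0 := by exact_mod_cast hn.ne'
  set Sc : ℂ := ∑ t, (v t : ℂ) with hScdef
  set Qc : ℂ := ∑ t, (2 * (v t : ℂ) + 1) ^ 2 with hQcdef
  set r : ℂ := Complex.exp (2 * Real.pi * Complex.I * (Sc + n + 1) / n) with hrdef
  have hSc : Sc = ((∑ t, v t : ℤ) : ℂ) := by push_cast [hScdef]; rfl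
  have hterm : ∀ k : ℕ, (-1 : ℂ) ^ k * Complex.exp (2 * k * Real.pi * Complex.I / n) *
      ((-Complex.I) ^ n * ∏ t, E τ (v t : ℂ) ((k * Real.pi + Real.pi * τ) / n)) =
      ((-Complex.I) ^ n * Complex.exp (Real.pi * Complex.I * τ * Qc / 4 +
        Real.pi * Complex.I * Sc + (2 * Sc + n) * Complex.I * (Real.pi * τ / n))) * r ^ k := by
    intro k
    have hk1 : ((-1 : ℂ)) ^ k = Complex.exp (Real.pi * Complex.I * k) := by
      rw [show ((Real.pi : ℂ) * Complex.I * k) = (k : ℂ) * (Real.pi * Complex.I) by ring,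
        Complex.exp_nat_mul, Complex.exp_pi_mul_I]
    have hk2 : r ^ k = Complex.exp ((k : ℂ) * (2 * Real.pi * Complex.I * (Sc + n + 1) / n)) := by
      rw [Complex.exp_nat_mul, hrdef]
    rw [prod_E, hk1, hk2, ← hScdef, ← hQcdef]
    have hcomb : ∀ x y w : ℂ, Complex.exp x * Complex.exp y * ((-Complex.I) ^ n * Complex.exp w)
        = (-Complex.I) ^ n * Complex.exp (x + y + w) := by
      intro x y w
      rw [Complex.exp_add, Complex.exp_add]
      ring
    rw [hcomb]
    conv_rhs => rw [mul_assoc, ← Complex.exp_add]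
    congr 2
    field_simp
    ring
  rw [Finset.sum_congr rfl fun k _ => hterm k, ← Finset.mul_sum]
  have hrn : r ^ n = 1 := by
    rw [hrdef, ← Complex.exp_nat_mul]
    rw [show (n : ℂ) * (2 * Real.pi * Complex.I * (Sc + n + 1) / n)
        = (((∑ t, v t : ℤ) + n + 1 : ℤ) : ℂ) * (2 * Real.pi * Complex.I) by
      push_cast [← hSc]; field_simp]
    exact Complex.exp_int_mul_two_pi_mul_I _
  have hrne : r ≠ 1 := by
    intro hr
    rw [hrdef, Complex.exp_eq_one_iff] at hr
    obtain ⟨a, ha⟩ := hr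
    have h2πI : (2 * (Real.pi : ℂ) * Complex.I) ≠ 0 := by
      simp [Real.pi_ne_zero, Complex.I_ne_zero]
    have hcan : Sc + n + 1 = a * n := by
      have h1 : (2 * (Real.pi : ℂ) * Complex.I) * (Sc + n + 1)
          = (2 * (Real.pi : ℂ) * Complex.I) * (a * n) := by
        field_simp at ha
        linear_combination (2 * (Real.pi : ℂ) * Complex.I) * ha
      exact mul_left_cancel₀ h2πI h1
    have hcast : ((∑ t, v t : ℤ) + n + 1 : ℤ) = a * n := by
      exact_mod_cast (hSc ▸ hcan : ((∑ t, v t : ℤ) : ℂ) + n + 1 = a * n)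
    exact hd ⟨a - 1, by linear_combination hcast⟩
  rw [geom_sum_eq hrne, hrn, sub_self, zero_div, mul_zero]




lemma good_case (hn : 0 < n) (hodd : Odd n) (v : Fin n → ℤ) {j : ℤ}
    (hj : (∑ t, v t) + 1 = n * j) (k : ℕ) :
    (∏ t, E τ ((v t - (2 * j + 1) : ℤ) : ℂ) ((k * Real.pi + Real.pi * τ) / n)) =
      - ∏ t, E τ ((v t : ℤ) : ℂ) ((k * Real.pi + Real.pi * τ) / n) := by
  have hπ : (Real.pi : ℂ) ≠ 0 := by exact_mod_cast Real.pi_ne_zero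
  have hn0 : (n : ℂ) ≠ 0 := by exact_mod_cast hn.ne'
  set z : ℂ := (k * Real.pi + Real.pi * τ) / n with hzdef
  set c : ℤ := 2 * j + 1 with hcdef
  set α : ℂ := Real.pi * Complex.I * τ * ((c : ℂ) ^ 2 - c) - Real.pi * Complex.I * c
      - 2 * (c : ℂ) * Complex.I * z with hαdef
  set β : ℂ := -(2 * Real.pi * Complex.I * τ * (c : ℂ)) with hβdef
  have hpt : ∀ t : Fin n,
      (Real.pi : ℂ) * Complex.I * τ * (2 * ((v t - c : ℤ) : ℂ) + 1) ^ 2 / 4 +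
        Real.pi * Complex.I * ((v t - c : ℤ) : ℂ) +
        (2 * ((v t - c : ℤ) : ℂ) + 1) * Complex.I * z =
      ((Real.pi : ℂ) * Complex.I * τ * (2 * ((v t : ℤ) : ℂ) + 1) ^ 2 / 4 +
        Real.pi * Complex.I * ((v t : ℤ) : ℂ) +
        (2 * ((v t : ℤ) : ℂ) + 1) * Complex.I * z) + (α + β * ((v t : ℤ) : ℂ)) := by
    intro t
    push_cast
    rw [hαdef, hβdef]
    ring
  have hsum : ∑ t : Fin n, ((Real.pi : ℂ) * Complex.I * τ * (2 * ((v t - c : ℤ) : ℂ) + 1) ^ 2 / 4 +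
        Real.pi * Complex.I * ((v t - c : ℤ) : ℂ) +
        (2 * ((v t - c : ℤ) : ℂ) + 1) * Complex.I * z) =
      (∑ t : Fin n, ((Real.pi : ℂ) * Complex.I * τ * (2 * ((v t : ℤ) : ℂ) + 1) ^ 2 / 4 +
        Real.pi * Complex.I * ((v t : ℤ) : ℂ) +
        (2 * ((v t : ℤ) : ℂ) + 1) * Complex.I * z)) +
      ((n : ℂ) * α + β * (∑ t, ((v t : ℤ) : ℂ))) := by
    rw [Finset.sum_congr rfl fun t _ => hpt t, Finset.sum_add_distrib]
    congr 1
    rw [Finset.sum_add_distrib, Finset.sum_const, Finset.card_univ, Fintype.card_fin,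
      nsmul_eq_mul, ← Finset.mul_sum]
  have hScast : (∑ t, ((v t : ℤ) : ℂ)) = (n : ℂ) * j - 1 := by
    have : ((∑ t, v t : ℤ) : ℂ) = ((n * j - 1 : ℤ) : ℂ) := by
      norm_cast
      linarith [hj]
    push_cast at this ⊢
    rw [this]
  have hD : (n : ℂ) * α + β * (∑ t, ((v t : ℤ) : ℂ)) =
      Real.pi * Complex.I * ((-(n * c) : ℤ) : ℂ) +
        2 * Real.pi * Complex.I * ((-(k * c : ℤ) : ℤ) : ℂ) := by
    rw [hScast, hαdef, hβdef, hzdef, hcdef]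
    push_cast
    field_simp
    ring
  have hexpD : Complex.exp ((n : ℂ) * α + β * (∑ t, ((v t : ℤ) : ℂ))) = -1 := by
    have hoddnc : Odd (-((n : ℤ) * c)) := by
      refine Odd.neg ?_
      exact ((Int.odd_coe_nat n).mpr hodd).mul ⟨j, hcdef⟩
    rw [hD, Complex.exp_add, exp_pi_I_odd hoddnc, exp_two_pi_I_int]
    ring
  calc (∏ t, E τ ((v t - c : ℤ) : ℂ) z)
      = Complex.exp (∑ t : Fin n, ((Real.pi : ℂ) * Complex.I * τ *
          (2 * ((v t - c : ℤ) : ℂ) + 1) ^ 2 / 4 +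
          Real.pi * Complex.I * ((v t - c : ℤ) : ℂ) +
          (2 * ((v t - c : ℤ) : ℂ) + 1) * Complex.I * z)) := by
        rw [Complex.exp_sum]; rfl
    _ = Complex.exp (∑ t : Fin n, ((Real.pi : ℂ) * Complex.I * τ *
          (2 * ((v t : ℤ) : ℂ) + 1) ^ 2 / 4 +
          Real.pi * Complex.I * ((v t : ℤ) : ℂ) +
          (2 * ((v t : ℤ) : ℂ) + 1) * Complex.I * z)) *
        Complex.exp ((n : ℂ) * α + β * (∑ t, ((v t : ℤ) : ℂ))) := by
        rw [hsum, Complex.exp_add]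
    _ = - ∏ t, E τ ((v t : ℤ) : ℂ) z := by
        rw [hexpD, Complex.exp_sum]
        simp only [E]
        ring


end ThetaAux

theorem theta_power_sum_vanishes (τ : ℂ) (hτ : 0 < τ.im)
    (n : ℕ) (hn : 0 < n) (hodd : Odd n) :
    ∑ k ∈ Finset.range n, (-1 : ℂ) ^ k *
        Complex.exp (2 * k * Real.pi * Complex.I / n) *
        theta1 ((k * Real.pi + Real.pi * τ) / n) τ ^ n = 0 := by
  classical
  have hnZ : (n : ℤ) ≠ 0 := by exact_mod_cast hn.ne'
  set g : ℕ → (Fin n → ℤ) → ℂ := fun k v =>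
    (-1 : ℂ) ^ k * Complex.exp (2 * k * Real.pi * Complex.I / n) *
      ((-Complex.I) ^ n * ∏ t, ThetaAux.E τ (v t : ℂ) ((k * Real.pi + Real.pi * τ) / n))
    with hgdef
  have hterm : ∀ k : ℕ, (-1 : ℂ) ^ k * Complex.exp (2 * k * Real.pi * Complex.I / n) *
      theta1 ((k * Real.pi + Real.pi * τ) / n) τ ^ n = ∑' v : Fin n → ℤ, g k v := by
    intro k
    have hp := (ThetaAux.hasSum_prod
      (ThetaAux.summable_E hτ ((k * Real.pi + Real.pi * τ) / n)) n).1
    rw [ThetaAux.theta1_eq hτ, mul_pow, ← hp.tsum_eq, hgdef]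
    rw [tsum_mul_left, tsum_mul_left]
  have hsummable : ∀ k ∈ Finset.range n, Summable (g k) := by
    intro k _
    have hp := (ThetaAux.hasSum_prod
      (ThetaAux.summable_E hτ ((k * Real.pi + Real.pi * τ) / n)) n).1
    rw [hgdef]
    exact (hp.summable.mul_left _).mul_left _
  rw [Finset.sum_congr rfl fun k _ => hterm k, ← Summable.tsum_finsetSum hsummable]
  set Φ : (Fin n → ℤ) → (Fin n → ℤ) := fun v =>
    if (n : ℤ) ∣ (∑ t, v t) + 1 then
      (fun t => v t - (2 * (((∑ t, v t) + 1) / (n : ℤ)) + 1)) else v with hΦdef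
  have hdiv : ∀ {s jj : ℤ}, s + 1 = n * jj → (s + 1) / (n : ℤ) = jj := by
    intro s jj h
    rw [h]
    exact Int.mul_ediv_cancel_left _ hnZ
  have hshift : ∀ (v : Fin n → ℤ) (c : ℤ),
      (∑ t : Fin n, (v t - c)) = (∑ t, v t) - n * c := by
    intro v c
    rw [Finset.sum_sub_distrib, Finset.sum_const, Finset.card_univ, Fintype.card_fin,
      nsmul_eq_mul]
  have hgood : ∀ (v : Fin n → ℤ) {jj : ℤ}, (∑ t, v t) + 1 = (n : ℤ) * jj →
      Φ v = fun t => v t - (2 * jj + 1) := by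
    intro v jj h
    rw [hΦdef]
    simp only [hdiv h]
    exact if_pos ⟨jj, h⟩
  have hΦinv : Function.Involutive Φ := by
    intro v
    by_cases hd : (n : ℤ) ∣ (∑ t, v t) + 1
    · obtain ⟨j, hj⟩ := hd
      have h1 : Φ v = fun t => v t - (2 * j + 1) := hgood v hj
      have h2 : (∑ t, Φ v t) + 1 = (n : ℤ) * (-(j + 1)) := by
        rw [h1, hshift]
        linear_combination hj
      have h3 : Φ (Φ v) = fun t => Φ v t - (2 * (-(j + 1)) + 1) := hgood (Φ v) h2
      funext t
      rw [h3]
      simp only [h1]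
      ring
    · have h1 : Φ v = v := by rw [hΦdef]; simp only [if_neg hd]
      rw [h1, h1]
  have hneg : ∀ v : Fin n → ℤ, (∑ k ∈ Finset.range n, g k (Φ v))
      = -∑ k ∈ Finset.range n, g k v := by
    intro v
    by_cases hd : (n : ℤ) ∣ (∑ t, v t) + 1
    · obtain ⟨j, hj⟩ := hd
      rw [hgood v hj, ← Finset.sum_neg_distrib]
      refine Finset.sum_congr rfl fun k _ => ?_
      rw [hgdef]
      simp only
      rw [ThetaAux.good_case hn hodd v hj k]
      ring
    · have h1 : Φ v = v := by rw [hΦdef]; simp only [if_neg hd]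
      have h0 : ∑ k ∈ Finset.range n, g k v = 0 := by
        rw [hgdef]
        exact ThetaAux.bad_case hn v hd
      rw [h1, h0, neg_zero]
  have hkey : (∑' v : Fin n → ℤ, ∑ k ∈ Finset.range n, g k v)
      = -(∑' v : Fin n → ℤ, ∑ k ∈ Finset.range n, g k v) := by
    conv_lhs => rw [← Equiv.tsum_eq (Function.Involutive.toPerm Φ hΦinv)
      (fun v => ∑ k ∈ Finset.range n, g k v)]
    have : ∀ v : Fin n → ℤ, (∑ k ∈ Finset.range n,
        g k ((Function.Involutive.toPerm Φ hΦinv) v)) = -∑ k ∈ Finset.range n, g k v := by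
      intro v
      rw [Function.Involutive.coe_toPerm]
      exact hneg v
    rw [tsum_congr this, tsum_neg]
  linear_combination hkey / 2
end

section
/- Let τ have positive imaginary part and let θ₁ be the first Jacobi theta function. For all complex numbers x, y, u, v, w: θ₁(x+u+w|τ)θ₁(x-u|τ)θ₁(y+v+w|τ)θ₁(y-v|τ) - θ₁(y+u+w|τ)θ₁(y-u|τ)θ₁(x+v+w|τ)θ₁(x-v|τ) = θ₁(x-y|τ)θ₁(x+y+w|τ)θ₁(u+v+w|τ)θ₁(u-v|τ). -/
open Complex

namespace GW
set_option maxHeartbeats 1000000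

noncomputable def zt (τ z : ℂ) (n : ℤ) : ℂ :=
  Complex.exp ((Real.pi : ℂ) * Complex.I * τ * (2 * n + 1) ^ 2 / 4 +
    n * ((Real.pi : ℂ) * Complex.I) + (2 * n + 1) * z * Complex.I)

lemma zt_eq (τ z : ℂ) (n : ℤ) :
    zt τ z n = Complex.exp ((Real.pi : ℂ) * I * τ / 4 + z * I) *
      jacobiTheta₂_term n ((τ + 1) / 2 + z / (Real.pi : ℂ)) τ := by
  rw [zt, jacobiTheta₂_term, ← Complex.exp_add]
  congr 1
  have hπ : (Real.pi : ℂ) ≠ 0 := by exact_mod_cast Real.pi_ne_zero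
  field_simp
  ring

lemma summable_zt {τ : ℂ} (hτ : 0 < τ.im) (z : ℂ) : Summable (zt τ z) := by
  have h := (summable_jacobiTheta₂_term_iff ((τ + 1) / 2 + z / (Real.pi : ℂ)) τ).mpr hτ
  exact ((h.mul_left _).congr fun n => (zt_eq τ z n).symm)

lemma summable_norm_zt {τ : ℂ} (hτ : 0 < τ.im) (z : ℂ) :
    Summable fun n => ‖zt τ z n‖ :=
  summable_norm_iff.mpr (summable_zt hτ z)

lemma zt_alt (τ z : ℂ) (n : ℤ) :
    zt τ z n = (-1 : ℂ) ^ n *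
      (Complex.exp ((Real.pi : ℂ) * I * τ * (2 * n + 1) ^ 2 / 4) *
        Complex.exp ((2 * n + 1) * z * I)) := by
  rw [zt, Complex.exp_add, Complex.exp_add]
  rw [Complex.exp_int_mul ((Real.pi : ℂ) * I) n, Complex.exp_pi_mul_I]
  ring

lemma pair_eq (τ z : ℂ) (n : ℕ) :
    (-1 : ℂ) ^ n * Complex.exp (Real.pi * Complex.I * τ * (2 * n + 1) ^ 2 / 4) *
      Complex.sin ((2 * n + 1) * z)
    = (- I / 2) * (zt τ z n + zt τ z (-(n + 1))) := by
  rw [zt_alt, zt_alt]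
  have h1 : ((Real.pi : ℂ) * I * τ * (2 * ((-(n + 1) : ℤ)) + 1) ^ 2 / 4)
      = (Real.pi : ℂ) * I * τ * (2 * (n : ℂ) + 1) ^ 2 / 4 := by
    push_cast; ring
  have h2 : ((2 * ((-(n + 1) : ℤ)) + 1) * z * I : ℂ) = -((2 * (n : ℂ) + 1) * z) * I := by
    push_cast; ring
  have h3 : ((2 * ((n : ℤ)) + 1) * z * I : ℂ) = ((2 * (n : ℂ) + 1) * z) * I := by
    push_cast; ring
  have h4 : ((Real.pi : ℂ) * I * τ * (2 * ((n : ℤ)) + 1) ^ 2 / 4)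
      = (Real.pi : ℂ) * I * τ * (2 * (n : ℂ) + 1) ^ 2 / 4 := by
    push_cast; ring
  rw [h1, h2, h3, h4]
  have h5 : ((-1 : ℂ) ^ (-(n + 1) : ℤ)) = -(-1 : ℂ) ^ (n : ℤ) := by
    rw [zpow_neg]
    rw [show ((n : ℤ) + 1) = (((n + 1 : ℕ)) : ℤ) by push_cast; ring]
    rw [zpow_natCast, zpow_natCast, pow_succ]
    rcases Nat.even_or_odd n with h | h
    · rw [h.neg_one_pow]; norm_num
    · rw [h.neg_one_pow]; norm_num
  rw [h5]
  have h6 : ((-1 : ℂ) ^ (n : ℤ)) = (-1 : ℂ) ^ n := zpow_natCast _ _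
  rw [h6, Complex.sin]
  ring

lemma theta1_eq {τ : ℂ} (hτ : 0 < τ.im) (z : ℂ) :
    theta1 z τ = -I * ∑' n : ℤ, zt τ z n := by
  rw [theta1]
  rw [tsum_congr (fun n => pair_eq τ z n), tsum_mul_left,
    tsum_nat_add_neg_add_one (summable_zt hτ z)]
  ring


noncomputable def qt (τ z₁ z₂ z₃ z₄ : ℂ) (p : (ℤ × ℤ) × ℤ × ℤ) : ℂ :=
  zt τ z₁ p.1.1 * zt τ z₂ p.1.2 * zt τ z₃ p.2.1 * zt τ z₄ p.2.2

lemma summable_qt {τ : ℂ} (hτ : 0 < τ.im) (z₁ z₂ z₃ z₄ : ℂ) :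
    Summable (qt τ z₁ z₂ z₃ z₄) := by
  have h := Summable.of_norm
    (Summable.mul_norm
      (Summable.mul_norm (summable_norm_zt hτ z₁) (summable_norm_zt hτ z₂))
      (Summable.mul_norm (summable_norm_zt hτ z₃) (summable_norm_zt hτ z₄)))
  exact h.congr fun p => by rw [qt]; ring

lemma prod4 {τ : ℂ} (hτ : 0 < τ.im) (z₁ z₂ z₃ z₄ : ℂ) :
    theta1 z₁ τ * theta1 z₂ τ * theta1 z₃ τ * theta1 z₄ τ
      = ∑' p, qt τ z₁ z₂ z₃ z₄ p := by
  have h12 := tsum_mul_tsum_of_summable_norm (summable_norm_zt hτ z₁) (summable_norm_zt hτ z₂)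
  have h34 := tsum_mul_tsum_of_summable_norm (summable_norm_zt hτ z₃) (summable_norm_zt hτ z₄)
  have h1234 := tsum_mul_tsum_of_summable_norm
    (Summable.mul_norm (summable_norm_zt hτ z₁) (summable_norm_zt hτ z₂))
    (Summable.mul_norm (summable_norm_zt hτ z₃) (summable_norm_zt hτ z₄))
  rw [theta1_eq hτ z₁, theta1_eq hτ z₂, theta1_eq hτ z₃, theta1_eq hτ z₄]
  calc (-I * ∑' n : ℤ, zt τ z₁ n) * (-I * ∑' n : ℤ, zt τ z₂ n) *
        (-I * ∑' n : ℤ, zt τ z₃ n) * (-I * ∑' n : ℤ, zt τ z₄ n)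
      = I ^ 4 * (((∑' n : ℤ, zt τ z₁ n) * (∑' n : ℤ, zt τ z₂ n)) *
          ((∑' n : ℤ, zt τ z₃ n) * (∑' n : ℤ, zt τ z₄ n))) := by ring
    _ = ∑' p, qt τ z₁ z₂ z₃ z₄ p := by
        rw [I_pow_four, one_mul, h12, h34, h1234]
        exact tsum_congr fun p => by rw [qt]; ring

abbrev Q4 := (ℤ × ℤ) × ℤ × ℤ

def Pe (j : Q4) : Q4 := ((j.1.1, j.1.2), (j.2.1, j.1.1 + j.1.2 + j.2.1 + 2 * j.2.2))
def Po (j : Q4) : Q4 := ((j.1.1, j.1.2), (j.2.1, j.1.1 + j.1.2 + j.2.1 + 2 * j.2.2 + 1))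

lemma split (F : Q4 → ℂ) (hF : Summable F) :
    ∑' p, F p = (∑' j, F (Pe j)) + (∑' j, F (Po j)) := by
  classical
  set s : Set Q4 := {p | Even (p.1.1 + p.1.2 + p.2.1 + p.2.2)} with hs
  have hPe : ∀ j, Pe j ∈ s := fun j =>
    ⟨j.1.1 + j.1.2 + j.2.1 + j.2.2, by simp only [Pe, hs, Set.mem_setOf_eq]; ring⟩
  have hPo : ∀ j, Po j ∈ sᶜ := by
    intro j
    simp only [Po, hs, Set.mem_compl_iff, Set.mem_setOf_eq, Int.even_iff]
    omega
  have hbe : Function.Bijective (fun j => (⟨Pe j, hPe j⟩ : s)) := by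
    constructor
    · intro a b h
      have h' : Pe a = Pe b := congrArg Subtype.val h
      obtain ⟨⟨a1, a2⟩, a3, a4⟩ := a
      obtain ⟨⟨b1, b2⟩, b3, b4⟩ := b
      simp only [Pe, Prod.ext_iff] at h' ⊢
      omega
    · rintro ⟨⟨⟨n1, n2⟩, n3, n4⟩, hn⟩
      simp only [hs, Set.mem_setOf_eq] at hn
      obtain ⟨t, ht⟩ := hn
      refine ⟨((n1, n2), (n3, t - n1 - n2 - n3)), ?_⟩
      apply Subtype.ext
      show ((n1, n2), (n3, n1 + n2 + n3 + 2 * (t - n1 - n2 - n3))) = ((n1, n2), (n3, n4))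
      have hh : n1 + n2 + n3 + 2 * (t - n1 - n2 - n3) = n4 := by omega
      rw [hh]
  have hbo : Function.Bijective (fun j => (⟨Po j, hPo j⟩ : ↥sᶜ)) := by
    constructor
    · intro a b h
      have h' : Po a = Po b := congrArg Subtype.val h
      obtain ⟨⟨a1, a2⟩, a3, a4⟩ := a
      obtain ⟨⟨b1, b2⟩, b3, b4⟩ := b
      simp only [Po, Prod.ext_iff] at h' ⊢
      omega
    · rintro ⟨⟨⟨n1, n2⟩, n3, n4⟩, hn⟩
      simp only [hs, Set.mem_compl_iff, Set.mem_setOf_eq, Int.even_iff] at hn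
      have : ∃ t, n4 = n1 + n2 + n3 + 2 * t + 1 := ⟨(n4 - n1 - n2 - n3 - 1) / 2, by omega⟩
      obtain ⟨t, ht⟩ := this
      refine ⟨((n1, n2), (n3, t)), ?_⟩
      apply Subtype.ext
      show ((n1, n2), (n3, n1 + n2 + n3 + 2 * t + 1)) = ((n1, n2), (n3, n4))
      have hh : n1 + n2 + n3 + 2 * t + 1 = n4 := by omega
      rw [hh]
  have he : ∑' (p : s), F p = ∑' j, F (Pe j) :=
    ((Equiv.ofBijective _ hbe).tsum_eq (fun p : s => F p)).symm
  have ho : ∑' (p : ↥sᶜ), F p = ∑' j, F (Po j) :=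
    ((Equiv.ofBijective _ hbo).tsum_eq (fun p : ↥sᶜ => F p)).symm
  have hadd := ((hF.subtype s).hasSum.add_compl (hF.subtype sᶜ).hasSum).tsum_eq
  rw [hadd, ← he, ← ho]
  rfl

def sA : Q4 ≃ Q4 where
  toFun j := ((j.1.1 + j.2.1 + j.2.2, j.1.2 + j.2.1 + j.2.2), (-j.2.2, -j.2.1))
  invFun j := ((j.1.1 + j.2.1 + j.2.2, j.1.2 + j.2.1 + j.2.2), (-j.2.2, -j.2.1))
  left_inv j := by obtain ⟨⟨a, b⟩, c, d⟩ := j; simp only [Prod.mk.injEq, and_true]; omega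
  right_inv j := by obtain ⟨⟨a, b⟩, c, d⟩ := j; simp only [Prod.mk.injEq, and_true]; omega

def sB : Q4 ≃ Q4 where
  toFun j := ((-j.2.1 - j.2.2 - 1, j.1.1 + j.1.2 + j.2.1 + j.2.2 + 1),
    (-j.1.2 - j.2.2 - 1, j.2.2))
  invFun j := ((j.1.1 + j.1.2 + j.2.1 + j.2.2 + 1, -j.2.1 - j.2.2 - 1),
    (-j.1.1 - j.2.2 - 1, j.2.2))
  left_inv j := by obtain ⟨⟨a, b⟩, c, d⟩ := j; simp only [Prod.mk.injEq, and_true]; omega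
  right_inv j := by obtain ⟨⟨a, b⟩, c, d⟩ := j; simp only [Prod.mk.injEq, and_true]; omega

def sC : Q4 ≃ Q4 where
  toFun j := ((j.2.1 + j.2.2, j.1.1 + j.1.2 + j.2.1 + j.2.2 + 1),
    (-j.1.2 - j.2.2 - 1, -j.2.1))
  invFun j := ((j.1.2 + j.2.1 + j.2.2, -j.1.1 - j.2.1 - j.2.2 - 1),
    (-j.2.2, j.1.1 + j.2.2))
  left_inv j := by obtain ⟨⟨a, b⟩, c, d⟩ := j; simp only [Prod.mk.injEq, and_true]; omega
  right_inv j := by obtain ⟨⟨a, b⟩, c, d⟩ := j; simp only [Prod.mk.injEq, and_true]; omega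

lemma exp_eq_exp_of_sub (E₁ E₂ : ℂ) (m : ℤ) (h : E₁ = E₂ + m * (2 * (Real.pi : ℂ) * I)) :
    Complex.exp E₁ = Complex.exp E₂ := by
  rw [h, Complex.exp_add, Complex.exp_int_mul_two_pi_mul_I, mul_one]

lemma exp_eq_neg_exp_of_sub (E₁ E₂ : ℂ) (m : ℤ)
    (h : E₁ = E₂ + (2 * m + 1) * ((Real.pi : ℂ) * I)) :
    Complex.exp E₁ = -Complex.exp E₂ := by
  have h2 : E₁ = (E₂ + (Real.pi : ℂ) * I) + m * (2 * (Real.pi : ℂ) * I) := by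
    rw [h]; push_cast; ring
  rw [h2, Complex.exp_add, Complex.exp_int_mul_two_pi_mul_I, mul_one, Complex.exp_add,
    Complex.exp_pi_mul_I]
  ring

lemma keyA (τ x y u v w : ℂ) (j : Q4) :
    qt τ (x + u + w) (x - u) (y + v + w) (y - v) (Pe j)
      = qt τ (y + u + w) (y - u) (x + v + w) (x - v) (Pe (sA j)) := by
  obtain ⟨⟨a, b⟩, c, d⟩ := j
  simp only [qt, zt, Pe, sA, Equiv.coe_fn_mk, ← Complex.exp_add]
  apply exp_eq_exp_of_sub _ _ 0
  push_cast
  ring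

lemma keyB (τ x y u v w : ℂ) (j : Q4) :
    qt τ (x + u + w) (x - u) (y + v + w) (y - v) (Po j)
      = qt τ (x - y) (x + y + w) (u + v + w) (u - v) (Po (sB j)) := by
  obtain ⟨⟨a, b⟩, c, d⟩ := j
  simp only [qt, zt, Po, sB, Equiv.coe_fn_mk, ← Complex.exp_add]
  apply exp_eq_exp_of_sub _ _ (b + c + d + 1)
  push_cast
  ring

lemma keyC (τ x y u v w : ℂ) (j : Q4) :
    qt τ (x - y) (x + y + w) (u + v + w) (u - v) (Pe (sC j))
      = -qt τ (y + u + w) (y - u) (x + v + w) (x - v) (Po j) := by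
  obtain ⟨⟨a, b⟩, c, d⟩ := j
  simp only [qt, zt, Pe, Po, sC, Equiv.coe_fn_mk, ← Complex.exp_add]
  apply exp_eq_neg_exp_of_sub _ _ (-b - 1)
  push_cast
  ring

end GW

open GW in
theorem generalized_weierstrass_identity (τ : ℂ) (hτ : 0 < τ.im)
    (x y u v w : ℂ) :
    theta1 (x + u + w) τ * theta1 (x - u) τ * theta1 (y + v + w) τ * theta1 (y - v) τ -
      theta1 (y + u + w) τ * theta1 (y - u) τ * theta1 (x + v + w) τ * theta1 (x - v) τ =
      theta1 (x - y) τ * theta1 (x + y + w) τ * theta1 (u + v + w) τ * theta1 (u - v) τ := by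
  have S1 := summable_qt hτ (x + u + w) (x - u) (y + v + w) (y - v)
  have S2 := summable_qt hτ (y + u + w) (y - u) (x + v + w) (x - v)
  have SR := summable_qt hτ (x - y) (x + y + w) (u + v + w) (u - v)
  rw [prod4 hτ, prod4 hτ, prod4 hτ, split _ S1, split _ S2, split _ SR]
  have hA : (∑' j, qt τ (x + u + w) (x - u) (y + v + w) (y - v) (Pe j))
      = ∑' j, qt τ (y + u + w) (y - u) (x + v + w) (x - v) (Pe j) := by
    rw [tsum_congr (keyA τ x y u v w)]
    exact sA.tsum_eq (fun j => qt τ (y + u + w) (y - u) (x + v + w) (x - v) (Pe j))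
  have hB : (∑' j, qt τ (x + u + w) (x - u) (y + v + w) (y - v) (Po j))
      = ∑' j, qt τ (x - y) (x + y + w) (u + v + w) (u - v) (Po j) := by
    rw [tsum_congr (keyB τ x y u v w)]
    exact sB.tsum_eq (fun j => qt τ (x - y) (x + y + w) (u + v + w) (u - v) (Po j))
  have hC : (∑' j, qt τ (x - y) (x + y + w) (u + v + w) (u - v) (Pe j))
      = -∑' j, qt τ (y + u + w) (y - u) (x + v + w) (x - v) (Po j) := by
    calc (∑' j, qt τ (x - y) (x + y + w) (u + v + w) (u - v) (Pe j))
        = ∑' j, qt τ (x - y) (x + y + w) (u + v + w) (u - v) (Pe (sC j)) :=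
          (sC.tsum_eq (fun j => qt τ (x - y) (x + y + w) (u + v + w) (u - v) (Pe j))).symm
      _ = ∑' j, -(qt τ (y + u + w) (y - u) (x + v + w) (x - v) (Po j)) :=
          tsum_congr (keyC τ x y u v w)
      _ = -∑' j, qt τ (y + u + w) (y - u) (x + v + w) (x - v) (Po j) := tsum_neg
  rw [hA, hB, hC]
  ring
end
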